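/- arXiv:2507.18852 — 3 statements merged into one kernel-verified Lean document; each statement's English description precedes it below -/
import Mathlib

section
/- Let D be a reduced pipe dream with a cross tile at (i,j). Then (i,j) is movable in D (i.e., there is a bump tile above (i,j) in column j) if and only if the set V_{ij}(D) is nonempty, where V_{ij}(D) consists of all pipe dreams Q obtainable from D by a sequence of generalized ladder moves at positions all northeast of (i,j) such that Q(i,j) is a bump tile. -/
open Finset

/-- A pipe dream is encoded as a tiling of the (1-indexed) grid:
`true` = cross tile (+), `false` = bump tile (•). -/
abbrev PipeDream := ℕ × ℕ → Bool

namespace PipeDream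

/-- All cross tiles lie in the staircase {(i,j) | 1 ≤ i, 1 ≤ j, i+j ≤ n+1}. -/
def InStaircase (n : ℕ) (D : PipeDream) : Prop :=
  ∀ i j, D (i, j) = true → 1 ≤ i ∧ 1 ≤ j ∧ i + j ≤ n + 1

/-- Reading word: rows top to bottom, within each row right to left; a cross at
(i,j) contributes the simple transposition s_{i+j-1}. -/
def word (n : ℕ) (D : PipeDream) : List ℕ :=
  (List.range n).flatMap (fun i =>
    ((List.range n).reverse.filterMap (fun j =>
      if D (i + 1, j + 1) = true then some (i + j + 1) else none)))

/-- The permutation of ℕ realized by the wires of the pipe dream. -/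
def perm (n : ℕ) (D : PipeDream) : Equiv.Perm ℕ :=
  (List.map (fun k => Equiv.swap k (k + 1)) (word n D)).prod

def crossCount (n : ℕ) (D : PipeDream) : ℕ := (word n D).length

/-- Number of inversions of w among 1..n (the Coxeter length of w ∈ S_n). -/
def invCount (w : Equiv.Perm ℕ) (n : ℕ) : ℕ :=
  (((Finset.Icc 1 n) ×ˢ (Finset.Icc 1 n)).filter
    (fun p => p.1 < p.2 ∧ w p.2 < w p.1)).card

/-- Reduced pipe dreams for w ∈ S_n: crosses in the staircase, wires realize w,
and no two wires cross twice (equivalently, #crosses = ℓ(w)). -/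
def RPD (n : ℕ) (w : Equiv.Perm ℕ) : Set PipeDream :=
  {D | InStaircase n D ∧ perm n D = w ∧ crossCount n D = invCount w n}

/-- (i,j) is a movable cross tile: a cross with a bump above it in column j. -/
def Movable (D : PipeDream) (i j : ℕ) : Prop :=
  D (i, j) = true ∧ ∃ h, 1 ≤ h ∧ h < i ∧ D (h, j) = false

/-- h_{ij}(D): largest h ∈ [1,i-1] with a bump at (h,j). -/
def hIdx (D : PipeDream) (i j : ℕ) : ℕ :=
  ((Finset.Ico 1 i).filter (fun h => D (h, j) = false)).sup id

/-- k_{ij}(D): least k ∈ [j+1,n] with a bump at (i,k). -/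
def kIdx (n : ℕ) (D : PipeDream) (i j : ℕ) : ℕ :=
  WithTop.untopD 0 (((Finset.Icc (j + 1) n).filter (fun k => D (i, k) = false)).min)

/-- Rect_{ij}(D) = [h,i] × [j,k]. -/
def Rect (n : ℕ) (D : PipeDream) (i j : ℕ) : Finset (ℕ × ℕ) :=
  Finset.Icc (hIdx D i j, j) (i, kIdx n D i j)

/-- max_bump_row_{ij}(D): largest p ∈ [h,i) whose row contains a bump tile in Rect. -/
def maxBumpRow (n : ℕ) (D : PipeDream) (i j : ℕ) : ℕ :=
  ((Finset.Ico (hIdx D i j) i).filter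
    (fun p => ∃ q ∈ Finset.Icc j (kIdx n D i j), D (p, q) = false)).sup id

/-- min_bump_col_{ij}(D): least q ∈ (j,k] whose column contains a bump tile in Rect. -/
def minBumpCol (n : ℕ) (D : PipeDream) (i j : ℕ) : ℕ :=
  WithTop.untopD 0
    (((Finset.Icc (j + 1) (kIdx n D i j)).filter
      (fun q => ∃ p ∈ Finset.Icc (hIdx D i j) i, D (p, q) = false)).min)

/-- (i,j) is ladder movable: the bumps of Rect_{ij}(D) are exactly the three
corners (h,j), (h,k), (i,k). -/
def LadderMovable (n : ℕ) (D : PipeDream) (i j : ℕ) : Prop :=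
  Movable D i j ∧
    ∀ p q, (p, q) ∈ Rect n D i j →
      (D (p, q) = false ↔
        ((p, q) = (hIdx D i j, j) ∨ (p, q) = (hIdx D i j, kIdx n D i j) ∨
          (p, q) = (i, kIdx n D i j)))

/-- Generalized ladder move L_{ij}: swap the cross at (i,j) with the bump at (h,k). -/
def ladderMove (n : ℕ) (D : PipeDream) (i j : ℕ) : PipeDream :=
  fun st =>
    if st = (i, j) then false
    else if st = (hIdx D i j, kIdx n D i j) then true
    else D st

/-- One covering step of the ladder-move order on RPD(w). -/
def LadderStep (n : ℕ) (D Q : PipeDream) : Prop :=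
  ∃ i j, LadderMovable n D i j ∧ Q = ladderMove n D i j

/-- D ≤ Q in the ladder-move order (Q is obtained from D by a possibly empty
sequence of generalized ladder moves). -/
def ladderLE (n : ℕ) (D Q : PipeDream) : Prop :=
  Relation.ReflTransGen (LadderStep n) D Q

/-- One ladder-move step performed at a position northeast of (i,j). -/
def LadderStepNE (n i j : ℕ) (D Q : PipeDream) : Prop :=
  ∃ p q, p ≤ i ∧ j ≤ q ∧ LadderMovable n D p q ∧ Q = ladderMove n D p q

/-- V_{ij}(D): pipe dreams reachable from D by ladder moves at positions
northeast of (i,j), having a bump at (i,j). -/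
def V (n : ℕ) (D : PipeDream) (i j : ℕ) : Set PipeDream :=
  {Q | Relation.ReflTransGen (LadderStepNE n i j) D Q ∧ Q (i, j) = false}

/-- Auxiliary construction of Path_{ij}(D), with fuel (the row number strictly
decreases at each step, so fuel `i` always suffices). -/
def pathAux (n : ℕ) (D : PipeDream) (j : ℕ) : ℕ → ℕ × ℕ → Finset (ℕ × ℕ)
  | 0, _ => ∅
  | fuel + 1, (p, q) =>
      let p' := maxBumpRow n D p j
      let q' := WithTop.untopD j
        (((Finset.Icc j n).filter (fun t => D (p', t) = false)).min)
      let seg := ((Finset.Icc p' p).image fun r => (r, q)) ∪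
        ((Finset.Icc q' q).image fun t => (p', t))
      if q' = j then seg else seg ∪ pathAux n D j fuel (p', q')

/-- Path_{ij}(D): the lattice path from (i, k_{ij}(D)) to (h_{ij}(D), j). -/
def Path (n : ℕ) (D : PipeDream) (i j : ℕ) : Finset (ℕ × ℕ) :=
  pathAux n D j i (i, kIdx n D i j)

open scoped Classical in
/-- Shape_{ij}(D): tiles of Rect_{ij}(D) weakly below Path_{ij}(D). -/
noncomputable def Shape (n : ℕ) (D : PipeDream) (i j : ℕ) : Finset (ℕ × ℕ) :=
  (Rect n D i j).filter fun st => ∃ p' ≤ st.1, (p', st.2) ∈ Path n D i j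

/-- The move operation M_{ij} of Definition 3.4, written with fuel:
(i) if max_bump_row = h and min_bump_col = k, apply the ladder move L_{ij};
(ii) if max_bump_row = a > h, recurse as M_{ij} ∘ M_{aj};
(iii) otherwise recurse as M_{ij} ∘ M_{ib} with b = min_bump_col. -/
def moveAux (n : ℕ) : ℕ → PipeDream → ℕ → ℕ → PipeDream
  | 0, D, _, _ => D
  | fuel + 1, D, i, j =>
      if maxBumpRow n D i j = hIdx D i j ∧ minBumpCol n D i j = kIdx n D i j then
        ladderMove n D i j
      else if hIdx D i j < maxBumpRow n D i j then
        moveAux n fuel (moveAux n fuel D (maxBumpRow n D i j) j) i j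
      else
        moveAux n fuel (moveAux n fuel D i (minBumpCol n D i j)) i j

/-- The move operation M_{ij}.  The fuel `(n+2)^(n+2)` vastly exceeds the depth
of the recursion of Definition 3.4, so `move` agrees with M on all inputs for
which the recursion makes sense. -/
def move (n : ℕ) (D : PipeDream) (i j : ℕ) : PipeDream :=
  moveAux n ((n + 2) ^ (n + 2)) D i j

/-- (p,q) is northeast of (i,j). -/
def NorthEastOf (p q i j : ℕ) : Prop := p ≤ i ∧ j ≤ q

/-- (i,j) and (p,q) are southwest-incomparable. -/
def SWIncomparable (i j p q : ℕ) : Prop := (i < p ∧ j < q) ∨ (p < i ∧ q < j)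


-- ===== auxiliary development =====

def sprod (L : List ℕ) : Equiv.Perm ℕ := (L.map fun k => Equiv.swap k (k+1)).prod

lemma sprod_nil : sprod [] = 1 := rfl
lemma sprod_cons (a : ℕ) (L : List ℕ) : sprod (a :: L) = Equiv.swap a (a+1) * sprod L := by
  simp [sprod]
lemma sprod_append (A B : List ℕ) : sprod (A ++ B) = sprod A * sprod B := by
  simp [sprod]
lemma sprod_append_apply (A B : List ℕ) (x : ℕ) : sprod (A ++ B) x = sprod A (sprod B x) := by
  simp [sprod_append]
lemma sprod_single (a : ℕ) : sprod [a] = Equiv.swap a (a+1) := by simp [sprod]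

lemma sprod_fix_lt (L : List ℕ) (x : ℕ) (h : ∀ a ∈ L, x < a) : sprod L x = x := by
  induction L with
  | nil => rfl
  | cons a L ih =>
    rw [sprod_cons, Equiv.Perm.mul_apply, ih (fun b hb => h b (List.mem_cons_of_mem _ hb))]
    have := h a (List.mem_cons_self)
    exact Equiv.swap_apply_of_ne_of_ne (by omega) (by omega)

lemma sprod_fix_gt (L : List ℕ) (x : ℕ) (h : ∀ a ∈ L, a + 1 < x) : sprod L x = x := by
  induction L with
  | nil => rfl
  | cons a L ih =>
    rw [sprod_cons, Equiv.Perm.mul_apply, ih (fun b hb => h b (List.mem_cons_of_mem _ hb))]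
    have := h a (List.mem_cons_self)
    exact Equiv.swap_apply_of_ne_of_ne (by omega) (by omega)

/-- letters of row `R` of `D` in columns `lo+1 .. hi`, read right to left. -/
def seg (D : PipeDream) (R lo hi : ℕ) : List ℕ :=
  (List.range (hi - lo)).reverse.filterMap
    fun t => if D (R, lo + t + 1) = true then some (R + lo + t) else none

lemma seg_self (D : PipeDream) (R lo : ℕ) : seg D R lo lo = [] := by
  simp [seg]

lemma seg_succ (D : PipeDream) (R : ℕ) {lo hi : ℕ} (h : lo ≤ hi) :
    seg D R lo (hi+1) =
      (if D (R, hi+1) = true then [R + hi] else []) ++ seg D R lo hi := by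
  unfold seg
  rw [show hi + 1 - lo = (hi - lo) + 1 by omega, List.range_succ, List.reverse_append]
  rw [List.filterMap_append]
  congr 1
  simp only [List.reverse_singleton, List.filterMap_cons, List.filterMap_nil]
  rw [show lo + (hi - lo) + 1 = hi + 1 by omega, show R + lo + (hi - lo) = R + hi by omega]
  split_ifs <;> rfl

lemma seg_split (D : PipeDream) (R : ℕ) {lo mid hi : ℕ} (h1 : lo ≤ mid) (h2 : mid ≤ hi) :
    seg D R lo hi = seg D R mid hi ++ seg D R lo mid := by
  obtain ⟨d, rfl⟩ : ∃ d, hi = mid + d := ⟨hi - mid, by omega⟩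
  induction d with
  | zero => simp [seg_self]
  | succ d ih =>
    rw [show mid + (d+1) = (mid+d) + 1 by omega,
      seg_succ D R (show lo ≤ mid + d by omega), seg_succ D R (show mid ≤ mid + d by omega),
      ih (by omega), List.append_assoc]

lemma mem_seg {D : PipeDream} {R lo hi a : ℕ} (h : a ∈ seg D R lo hi) :
    R + lo ≤ a ∧ a < R + hi := by
  simp only [seg, List.mem_filterMap, List.mem_reverse, List.mem_range] at h
  obtain ⟨t, ht, hv⟩ := h
  by_cases hD : D (R, lo + t + 1) = true
  · rw [if_pos hD] at hv; injection hv with hv; omega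
  · rw [if_neg hD] at hv; cases hv

lemma seg_congr {D D' : PipeDream} {R lo hi : ℕ}
    (h : ∀ c, lo < c → c ≤ hi → D (R, c) = D' (R, c)) :
    seg D R lo hi = seg D' R lo hi := by
  unfold seg
  apply List.filterMap_congr
  intro t ht
  simp only [List.mem_reverse, List.mem_range] at ht
  rw [h (lo + t + 1) (by omega) (by omega)]

lemma seg_single (D : PipeDream) (R c : ℕ) :
    seg D R c (c+1) = if D (R, c+1) = true then [R + c] else [] := by
  rw [seg_succ D R (le_refl c), seg_self, List.append_nil]

/-- action of a fully-crossed segment -/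
lemma seg_cross_act (D : PipeDream) (R : ℕ) {lo hi : ℕ} (hlh : lo ≤ hi)
    (hcross : ∀ c, lo < c → c ≤ hi → D (R, c) = true) (x : ℕ) :
    sprod (seg D R lo hi) x =
      if x = R + lo then R + hi else if R + lo < x ∧ x ≤ R + hi then x - 1 else x := by
  obtain ⟨d, rfl⟩ : ∃ d, hi = lo + d := ⟨hi - lo, by omega⟩
  clear hlh
  revert hcross x
  induction d with
  | zero =>
    intro x hcross
    rw [Nat.add_zero, seg_self, sprod_nil]
    simp only [Equiv.Perm.one_apply]
    split_ifs with h1 h2 <;> omega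
  | succ d ih =>
    intro x hcross
    rw [show lo + (d+1) = (lo+d)+1 by omega,
      seg_succ D R (show lo ≤ lo + d by omega),
      if_pos (hcross (lo+d+1) (by omega) (by omega)), sprod_append_apply,
      ih _ (fun c h1 h2 => hcross c h1 (by omega)), sprod_single]
    rw [Equiv.swap_apply_def]
    split_ifs <;> omega


def rowsW (D : PipeDream) (n lo hi : ℕ) : List ℕ :=
  (List.range (hi - lo)).flatMap fun t => seg D (lo + t + 1) 0 n

lemma rowsW_self (D : PipeDream) (n lo : ℕ) : rowsW D n lo lo = [] := by simp [rowsW]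

lemma rowsW_succ (D : PipeDream) (n : ℕ) {lo hi : ℕ} (h : lo ≤ hi) :
    rowsW D n lo (hi+1) = rowsW D n lo hi ++ seg D (hi+1) 0 n := by
  unfold rowsW
  rw [show hi + 1 - lo = (hi - lo) + 1 by omega, List.range_succ, List.flatMap_append]
  simp [show lo + (hi - lo) + 1 = hi + 1 by omega]

lemma rowsW_split (D : PipeDream) (n : ℕ) {lo mid hi : ℕ} (h1 : lo ≤ mid) (h2 : mid ≤ hi) :
    rowsW D n lo hi = rowsW D n lo mid ++ rowsW D n mid hi := by
  obtain ⟨d, rfl⟩ : ∃ d, hi = mid + d := ⟨hi - mid, by omega⟩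
  induction d with
  | zero => simp [rowsW_self]
  | succ d ih =>
    rw [show mid + (d+1) = (mid+d) + 1 by omega, rowsW_succ D n (show lo ≤ mid + d by omega),
      rowsW_succ D n (show mid ≤ mid + d by omega), ih (by omega), List.append_assoc]

lemma rowsW_single (D : PipeDream) (n c : ℕ) : rowsW D n c (c+1) = seg D (c+1) 0 n := by
  rw [rowsW_succ D n (le_refl c), rowsW_self, List.nil_append]

lemma word_eq (n : ℕ) (D : PipeDream) : word n D = rowsW D n 0 n := by
  unfold word rowsW
  apply List.flatMap_congr
  intro t _
  unfold seg
  apply List.filterMap_congr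
  intro u _
  rw [show (0:ℕ) + t + 1 = t + 1 by omega]
  by_cases hD : D (t + 1, u + 1) = true
  · rw [show (0:ℕ) + u + 1 = u + 1 by omega, if_pos hD, if_pos hD,
      show t + 1 + 0 + u = t + u + 1 by omega]
  · rw [show (0:ℕ) + u + 1 = u + 1 by omega, if_neg hD, if_neg hD]

lemma rowsW_congr {D D' : PipeDream} {n lo hi : ℕ}
    (h : ∀ R c, lo < R → R ≤ hi → D (R, c) = D' (R, c)) :
    rowsW D n lo hi = rowsW D' n lo hi := by
  unfold rowsW
  apply List.flatMap_congr
  intro t ht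
  simp only [List.mem_range] at ht
  exact seg_congr (fun c _ _ => h (lo + t + 1) c (by omega) (by omega))

lemma mem_rowsW {D : PipeDream} {n lo hi a : ℕ} (h : a ∈ rowsW D n lo hi) :
    a < hi + n := by
  simp only [rowsW, List.mem_flatMap, List.mem_range] at h
  obtain ⟨t, ht, hs⟩ := h
  have := mem_seg hs
  omega

lemma perm_eq_sprod (n : ℕ) (D : PipeDream) : perm n D = sprod (word n D) := rfl

lemma row_mid_act (D : PipeDream) {n R j k : ℕ} (h1j : 1 ≤ j) (hjk : j < k) (hkn : k ≤ n)
    (hcross : ∀ c, j ≤ c → c ≤ k → D (R, c) = true) :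
    sprod (seg D R 0 n) (R + j) = R + j - 1 ∧ sprod (seg D R 0 n) (R + k) = R + k - 1 := by
  have hsplit : seg D R 0 n = seg D R k n ++ (seg D R (j-1) k ++ seg D R 0 (j-1)) := by
    rw [seg_split D R (Nat.zero_le k) hkn,
      seg_split D R (show (0:ℕ) ≤ j - 1 by omega) (show j - 1 ≤ k by omega)]
  rw [hsplit]
  have hact := seg_cross_act D R (show j - 1 ≤ k by omega)
    (fun c hc1 hc2 => hcross c (by omega) hc2)
  constructor
  · rw [sprod_append_apply, sprod_append_apply,
      sprod_fix_gt (seg D R 0 (j-1)) (R+j) (fun a ha => by have := mem_seg ha; omega),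
      hact (R+j), if_neg (by omega), if_pos (by omega),
      sprod_fix_lt (seg D R k n) (R+j-1) (fun a ha => by have := mem_seg ha; omega)]
  · rw [sprod_append_apply, sprod_append_apply,
      sprod_fix_gt (seg D R 0 (j-1)) (R+k) (fun a ha => by have := mem_seg ha; omega),
      hact (R+k), if_neg (by omega), if_pos (by omega),
      sprod_fix_lt (seg D R k n) (R+k-1) (fun a ha => by have := mem_seg ha; omega)]

lemma row_i_act (D : PipeDream) {n i j k : ℕ} (h1j : 1 ≤ j) (hjk : j < k) (hkn : k ≤ n)
    (hbump : D (i, k) = false) (hcross : ∀ c, j < c → c < k → D (i, c) = true) :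
    sprod (seg D i j n) (i + j) = i + k - 1 ∧ sprod (seg D i j n) (i + j - 1) = i + j - 1 := by
  have hsplit : seg D i j n = seg D i k n ++ (seg D i (k-1) k ++ seg D i j (k-1)) := by
    rw [seg_split D i (show j ≤ k by omega) hkn,
      seg_split D i (show j ≤ k - 1 by omega) (show k - 1 ≤ k by omega)]
  have hsing : seg D i (k-1) k = [] := by
    have h1 : k - (k-1) = 1 := by omega
    unfold seg
    rw [h1]
    simp [List.range_succ, show k-1+0+1 = k from by omega, hbump]
  rw [hsplit, hsing, List.nil_append]
  have hact := seg_cross_act D i (show j ≤ k - 1 by omega)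
    (fun c hc1 hc2 => hcross c hc1 (by omega))
  constructor
  · rw [sprod_append_apply, hact (i+j), if_pos rfl,
      sprod_fix_lt (seg D i k n) (i+(k-1)) (fun a ha => by have := mem_seg ha; omega)]
    omega
  · rw [sprod_append_apply, hact (i+j-1), if_neg (by omega), if_neg (by omega),
      sprod_fix_lt (seg D i k n) (i+j-1) (fun a ha => by have := mem_seg ha; omega)]

lemma row_h_act (D : PipeDream) {h j k : ℕ} (h1j : 1 ≤ j) (hjk : j < k)
    (hbump : D (h, j) = false) (hcross : ∀ c, j < c → c < k → D (h, c) = true) :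
    sprod (seg D h 0 (k-1)) (h + j) = h + k - 1 ∧ sprod (seg D h 0 (k-1)) (h + k) = h + k := by
  have hsplit : seg D h 0 (k-1) = seg D h j (k-1) ++ (seg D h (j-1) j ++ seg D h 0 (j-1)) := by
    rw [seg_split D h (Nat.zero_le j) (show j ≤ k - 1 by omega),
      seg_split D h (show (0:ℕ) ≤ j - 1 by omega) (show j - 1 ≤ j by omega)]
  have hsing : seg D h (j-1) j = [] := by
    have h1 : j - (j-1) = 1 := by omega
    unfold seg
    rw [h1]
    simp [List.range_succ, show j-1+0+1 = j from by omega, hbump]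
  rw [hsplit, hsing, List.nil_append]
  have hact := seg_cross_act D h (show j ≤ k - 1 by omega)
    (fun c hc1 hc2 => hcross c hc1 (by omega))
  constructor
  · rw [sprod_append_apply,
      sprod_fix_gt (seg D h 0 (j-1)) (h+j) (fun a ha => by have := mem_seg ha; omega),
      hact (h+j), if_pos rfl]
    omega
  · rw [sprod_append_apply,
      sprod_fix_gt (seg D h 0 (j-1)) (h+k) (fun a ha => by have := mem_seg ha; omega),
      hact (h+k), if_neg (by omega), if_neg (by omega)]

lemma mid_act (D : PipeDream) {n h i j k : ℕ} (h1j : 1 ≤ j) (hjk : j < k) (hkn : k ≤ n)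
    (hhi : h < i)
    (hcross : ∀ r c, h < r → r < i → j ≤ c → c ≤ k → D (r, c) = true) :
    ∀ r, h ≤ r → r < i →
      sprod (rowsW D n r (i-1)) (i + j - 1) = r + j ∧
        sprod (rowsW D n r (i-1)) (i + k - 1) = r + k := by
  suffices H : ∀ d r, h ≤ r → r < i → i - 1 = r + d →
      sprod (rowsW D n r (i-1)) (i + j - 1) = r + j ∧
        sprod (rowsW D n r (i-1)) (i + k - 1) = r + k by
    intro r hr1 hr2
    exact H (i - 1 - r) r hr1 hr2 (by omega)
  intro d
  induction d with
  | zero =>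
    intro r hr1 hr2 hd
    have hir : i - 1 = r := by omega
    rw [hir, rowsW_self, sprod_nil]
    constructor <;> · simp only [Equiv.Perm.one_apply]; omega
  | succ d ih =>
    intro r hr1 hr2 hd
    have h1 : r + 1 ≤ i - 1 := by omega
    rw [rowsW_split D n (show r ≤ r + 1 by omega) h1, rowsW_single]
    obtain ⟨ih1, ih2⟩ := ih (r+1) (by omega) (by omega) (by omega)
    have hrow := row_mid_act D h1j hjk hkn
      (R := r + 1) (fun c hc1 hc2 => hcross (r+1) c (by omega) (by omega) hc1 hc2)
    constructor
    · rw [sprod_append_apply, ih1, hrow.1]; omega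
    · rw [sprod_append_apply, ih2, hrow.2]; omega

lemma swap_conj (f : Equiv.Perm ℕ) (a c : ℕ) (h1 : f c = a) (h2 : f (c+1) = a+1) :
    Equiv.swap a (a+1) * f = f * Equiv.swap c (c+1) := by
  ext x
  simp only [Equiv.Perm.mul_apply]
  rcases eq_or_ne x c with rfl | hx1
  · rw [Equiv.swap_apply_left, h1, Equiv.swap_apply_left, h2]
  rcases eq_or_ne x (c+1) with rfl | hx2
  · rw [Equiv.swap_apply_right, h2, Equiv.swap_apply_right, h1]
  · rw [Equiv.swap_apply_of_ne_of_ne hx1 hx2]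
    refine Equiv.swap_apply_of_ne_of_ne ?_ ?_
    · rw [← h1]; exact fun hc => hx1 (f.injective hc)
    · rw [← h2]; exact fun hc => hx2 (f.injective hc)

lemma z_conj (D : PipeDream) {n h i j k : ℕ}
    (hhi : h < i) (h1j : 1 ≤ j) (hjk : j < k) (hkn : k ≤ n)
    (P1 : D (h, j) = false)
    (P3 : ∀ r c, h < r → r < i → j ≤ c → c ≤ k → D (r, c) = true)
    (P4 : ∀ c, j < c → c < k → D (i, c) = true)
    (P5 : ∀ c, j < c → c < k → D (h, c) = true)
    (P6 : D (i, k) = false) :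
    Equiv.swap (h+k-1) (h+k) *
        sprod (seg D h 0 (k-1) ++ (rowsW D n h (i-1) ++ seg D i j n))
      = sprod (seg D h 0 (k-1) ++ (rowsW D n h (i-1) ++ seg D i j n)) *
        Equiv.swap (i+j-1) (i+j) := by
  have hmid := mid_act D h1j hjk hkn hhi P3 h (le_refl h) hhi
  have hrowi := row_i_act D h1j hjk hkn P6 P4
  have hrowh := row_h_act D h1j hjk P1 P5
  have e1 : sprod (seg D h 0 (k-1) ++ (rowsW D n h (i-1) ++ seg D i j n)) (i+j-1)
      = h + k - 1 := by
    rw [sprod_append_apply, sprod_append_apply, hrowi.2, hmid.1]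
    exact hrowh.1
  have e2 : sprod (seg D h 0 (k-1) ++ (rowsW D n h (i-1) ++ seg D i j n)) (i+j)
      = h + k := by
    rw [sprod_append_apply, sprod_append_apply, hrowi.1, hmid.2]
    exact hrowh.2
  have := swap_conj _ (h+k-1) (i+j-1) e1 (by rw [show i+j-1+1 = i+j by omega]; rw [e2]; omega)
  rw [show h+k-1+1 = h+k by omega] at this
  rw [show i+j-1+1 = i+j by omega] at this
  exact this

lemma swap_lt_aux {a v t : ℕ} (h : Equiv.swap a (a+1) t < Equiv.swap a (a+1) v) :
    t < v ∨ (v = a ∧ t = a + 1) := by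
  rw [Equiv.swap_apply_def, Equiv.swap_apply_def] at h
  split_ifs at h <;> omega

lemma invCount_swap_le (u : Equiv.Perm ℕ) (a N : ℕ) :
    invCount (Equiv.swap a (a+1) * u) N ≤ invCount u N + 1 := by
  classical
  unfold invCount
  set T := ((Finset.Icc 1 N ×ˢ Finset.Icc 1 N).filter fun p => p.1 < p.2 ∧ u p.2 < u p.1)
    with hT
  set p0 : ℕ × ℕ := if u.symm a < u.symm (a+1) then (u.symm a, u.symm (a+1))
    else (u.symm (a+1), u.symm a) with hp0
  have hsub : ((Finset.Icc 1 N ×ˢ Finset.Icc 1 N).filter fun p => p.1 < p.2 ∧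
      (Equiv.swap a (a+1) * u) p.2 < (Equiv.swap a (a+1) * u) p.1) ⊆ insert p0 T := by
    intro p hp
    replace hp := Finset.mem_filter.1 hp
    simp only [Equiv.Perm.mul_apply] at hp
    obtain ⟨hbox, hlt, hinv⟩ := hp
    rcases swap_lt_aux hinv with hlt2 | ⟨hva, hta⟩
    · exact Finset.mem_insert_of_mem (Finset.mem_filter.2 ⟨hbox, hlt, hlt2⟩)
    · have h1 : u.symm a = p.1 := by rw [← hva]; simp
      have h2 : u.symm (a+1) = p.2 := by rw [← hta]; simp
      have : p0 = p := by
        rw [hp0, if_pos (by rw [h1, h2]; exact hlt), h1, h2]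
      rw [← this]
      exact Finset.mem_insert_self _ _
  calc _ ≤ (insert p0 T).card := Finset.card_le_card hsub
    _ ≤ T.card + 1 := Finset.card_insert_le _ _

lemma invCount_one (N : ℕ) : invCount 1 N = 0 := by
  unfold invCount
  rw [Finset.card_eq_zero, Finset.filter_eq_empty_iff]
  intro p _
  simp only [Equiv.Perm.coe_one, id_eq]
  omega

lemma invCount_sprod_le (L : List ℕ) (N : ℕ) : invCount (sprod L) N ≤ L.length := by
  induction L with
  | nil => rw [sprod_nil, invCount_one]; simp
  | cons a L ih =>
    rw [sprod_cons]
    calc invCount (Equiv.swap a (a+1) * sprod L) N ≤ invCount (sprod L) N + 1 :=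
          invCount_swap_le _ _ _
      _ ≤ L.length + 1 := by omega
      _ = (a :: L).length := by simp

lemma hIdx_spec {D : PipeDream} {i j : ℕ} (hm : Movable D i j) :
    1 ≤ hIdx D i j ∧ hIdx D i j < i ∧ D (hIdx D i j, j) = false := by
  obtain ⟨-, h, hh1, hhi, hb⟩ := hm
  have hne : ((Finset.Ico 1 i).filter (fun p => D (p, j) = false)).Nonempty :=
    ⟨h, by simp only [Finset.mem_filter, Finset.mem_Ico]; exact ⟨⟨hh1, hhi⟩, hb⟩⟩
  obtain ⟨b, hb', he⟩ := Finset.exists_mem_eq_sup _ hne id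
  unfold hIdx
  rw [he]
  simp only [Finset.mem_filter, Finset.mem_Ico] at hb'
  exact ⟨hb'.1.1, hb'.1.2, hb'.2⟩

lemma hIdx_le {D : PipeDream} {i j r : ℕ} (hr1 : 1 ≤ r) (hri : r < i)
    (hb : D (r, j) = false) : r ≤ hIdx D i j :=
  Finset.le_sup (f := id)
    (by simp only [Finset.mem_filter, Finset.mem_Ico]; exact ⟨⟨hr1, hri⟩, hb⟩)

lemma hIdx_cross {D : PipeDream} {i j r : ℕ} (hr : hIdx D i j < r) (hri : r < i) :
    D (r, j) = true := by
  by_contra hc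
  rw [Bool.not_eq_true] at hc
  have := hIdx_le (by omega) hri hc
  omega

lemma untop'_le {x : WithTop ℕ} {c : ℕ} (h : x ≤ (c : WithTop ℕ)) :
    WithTop.untopD 0 x ≤ c := by
  rcases x with _ | m
  · exact Nat.zero_le c
  · exact WithTop.coe_le_coe.1 h

lemma kIdx_le_of_bump {n : ℕ} {D : PipeDream} {i j c : ℕ} (hc1 : j + 1 ≤ c) (hc2 : c ≤ n)
    (hb : D (i, c) = false) : kIdx n D i j ≤ c := by
  have hmem : c ∈ (Finset.Icc (j+1) n).filter (fun t => D (i, t) = false) := by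
    simp only [Finset.mem_filter, Finset.mem_Icc]; exact ⟨⟨hc1, hc2⟩, hb⟩
  have hmin := Finset.min_le hmem
  unfold kIdx
  exact untop'_le hmin

lemma kIdx_spec {n : ℕ} {D : PipeDream} {i j : ℕ} (hst : InStaircase n D)
    (hm : Movable D i j) :
    j + 1 ≤ kIdx n D i j ∧ kIdx n D i j ≤ n ∧ D (i, kIdx n D i j) = false := by
  obtain ⟨hcr, h, hh1, hhi, hb⟩ := hm
  obtain ⟨hi1, hj1, hijn⟩ := hst i j hcr
  have hi2 : 2 ≤ i := by omega
  have hbn : D (i, n) = false := by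
    by_contra hc
    rw [Bool.not_eq_false] at hc
    have := hst i n hc
    omega
  have hnmem : n ∈ (Finset.Icc (j+1) n).filter (fun t => D (i, t) = false) := by
    simp only [Finset.mem_filter, Finset.mem_Icc]
    exact ⟨⟨by omega, le_refl n⟩, hbn⟩
  unfold kIdx
  rcases hq : ((Finset.Icc (j+1) n).filter (fun t => D (i, t) = false)).min with _ | m
  · exact absurd (Finset.min_eq_top.1 hq) (Finset.ne_empty_of_mem hnmem)
  · have hmm : m ∈ (Finset.Icc (j+1) n).filter (fun t => D (i, t) = false) :=
      Finset.mem_of_min hq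
    simp only [Finset.mem_filter, Finset.mem_Icc] at hmm
    simpa using ⟨hmm.1.1, hmm.1.2, hmm.2⟩

lemma kIdx_cross {n : ℕ} {D : PipeDream} {i j c : ℕ} (hkn : kIdx n D i j ≤ n)
    (h1 : j < c) (h2 : c < kIdx n D i j) : D (i, c) = true := by
  by_contra hc
  rw [Bool.not_eq_true] at hc
  have := kIdx_le_of_bump (n := n) (D := D) (i := i) (j := j) (c := c) (by omega) (by omega) hc
  omega

lemma maxBumpRow_spec {n : ℕ} {D : PipeDream} {i j : ℕ} (hm : Movable D i j)
    (hjk : j ≤ kIdx n D i j) :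
    hIdx D i j ≤ maxBumpRow n D i j ∧ maxBumpRow n D i j < i := by
  obtain ⟨hh1, hhi, hhb⟩ := hIdx_spec hm
  have hne : ((Finset.Ico (hIdx D i j) i).filter
      (fun p => ∃ q ∈ Finset.Icc j (kIdx n D i j), D (p, q) = false)).Nonempty := by
    refine ⟨hIdx D i j, ?_⟩
    simp only [Finset.mem_filter, Finset.mem_Ico, Finset.mem_Icc]
    exact ⟨⟨le_refl _, hhi⟩, j, ⟨le_refl j, hjk⟩, hhb⟩
  obtain ⟨b, hb', he⟩ := Finset.exists_mem_eq_sup _ hne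
    (id : ℕ → ℕ)
  unfold maxBumpRow
  rw [he]
  simp only [Finset.mem_filter, Finset.mem_Ico] at hb'
  exact ⟨hb'.1.1, hb'.1.2⟩

lemma le_maxBumpRow {n : ℕ} {D : PipeDream} {i j r c : ℕ} (h1 : hIdx D i j ≤ r) (h2 : r < i)
    (h3 : j ≤ c) (h4 : c ≤ kIdx n D i j) (hb : D (r, c) = false) :
    r ≤ maxBumpRow n D i j :=
  Finset.le_sup (f := id) (by
    simp only [Finset.mem_filter, Finset.mem_Ico, Finset.mem_Icc]
    exact ⟨⟨h1, h2⟩, c, ⟨h3, h4⟩, hb⟩)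

lemma minBumpCol_le {n : ℕ} {D : PipeDream} {i j c p : ℕ} (h1 : j + 1 ≤ c)
    (h2 : c ≤ kIdx n D i j) (h3 : hIdx D i j ≤ p) (h4 : p ≤ i) (hb : D (p, c) = false) :
    minBumpCol n D i j ≤ c := by
  have hmem : c ∈ (Finset.Icc (j+1) (kIdx n D i j)).filter
      (fun q => ∃ p ∈ Finset.Icc (hIdx D i j) i, D (p, q) = false) := by
    simp only [Finset.mem_filter, Finset.mem_Icc]
    exact ⟨⟨h1, h2⟩, p, ⟨h3, h4⟩, hb⟩
  have hmin := Finset.min_le hmem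
  unfold minBumpCol
  exact untop'_le hmin

lemma minBumpCol_spec {n : ℕ} {D : PipeDream} {i j : ℕ} (hm : Movable D i j)
    (hjk : j + 1 ≤ kIdx n D i j) (hkb : D (i, kIdx n D i j) = false) :
    j + 1 ≤ minBumpCol n D i j ∧ minBumpCol n D i j ≤ kIdx n D i j := by
  obtain ⟨hh1, hhi, hhb⟩ := hIdx_spec hm
  have hmem : kIdx n D i j ∈ (Finset.Icc (j+1) (kIdx n D i j)).filter
      (fun q => ∃ p ∈ Finset.Icc (hIdx D i j) i, D (p, q) = false) := by
    simp only [Finset.mem_filter, Finset.mem_Icc]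
    exact ⟨⟨hjk, le_refl _⟩, i, ⟨by omega, le_refl i⟩, hkb⟩
  unfold minBumpCol
  rcases hq : ((Finset.Icc (j+1) (kIdx n D i j)).filter
      (fun q => ∃ p ∈ Finset.Icc (hIdx D i j) i, D (p, q) = false)).min with _ | m
  · exact absurd (Finset.min_eq_top.1 hq) (Finset.ne_empty_of_mem hmem)
  · have hmm := Finset.mem_of_min hq
    simp only [Finset.mem_filter, Finset.mem_Icc] at hmm
    simpa using ⟨hmm.1.1, hmm.1.2⟩

lemma mem_Rect {n : ℕ} {D : PipeDream} {i j p q : ℕ} :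
    (p, q) ∈ Rect n D i j ↔
      hIdx D i j ≤ p ∧ p ≤ i ∧ j ≤ q ∧ q ≤ kIdx n D i j := by
  simp only [Rect, Finset.mem_Icc, Prod.mk_le_mk]
  tauto

lemma ladderMove_self (n : ℕ) (D : PipeDream) (i j : ℕ) :
    ladderMove n D i j (i, j) = false := by simp [ladderMove]

lemma ladderMove_corner (n : ℕ) (D : PipeDream) (i j : ℕ)
    (hne : (hIdx D i j, kIdx n D i j) ≠ ((i : ℕ), (j : ℕ))) :
    ladderMove n D i j (hIdx D i j, kIdx n D i j) = true := by
  simp [ladderMove, hne]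

lemma ladderMove_other (n : ℕ) (D : PipeDream) (i j : ℕ) {st : ℕ × ℕ}
    (h1 : st ≠ (i, j)) (h2 : st ≠ (hIdx D i j, kIdx n D i j)) :
    ladderMove n D i j st = D st := by
  simp [ladderMove, h1, h2]

lemma seg_col (D : PipeDream) (R : ℕ) {c : ℕ} (hc : 1 ≤ c) :
    seg D R (c-1) c = if D (R, c) = true then [R + c - 1] else [] := by
  have h1 : c - (c-1) = 1 := by omega
  unfold seg
  rw [h1]
  have h2 : c - 1 + 0 + 1 = c := by omega
  have h3 : R + (c - 1) + 0 = R + c - 1 := by omega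
  simp only [List.range_succ, List.range_zero, List.nil_append, List.reverse_cons,
    List.reverse_nil, List.filterMap_cons, List.filterMap_nil, h2, h3]
  split_ifs <;> rfl

lemma word_decomp (D : PipeDream) {n h i j k : ℕ}
    (h1h : 1 ≤ h) (hhi : h < i) (hin : i ≤ n) (h1j : 1 ≤ j) (hjk : j < k) (hkn : k ≤ n) :
    word n D = rowsW D n 0 (h-1) ++ (seg D h k n ++ (seg D h (k-1) k ++
      ((seg D h 0 (k-1) ++ (rowsW D n h (i-1) ++ seg D i j n)) ++
      (seg D i (j-1) j ++ (seg D i 0 (j-1) ++ rowsW D n i n))))) := by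
  have hh : h - 1 + 1 = h := by omega
  have hii : i - 1 + 1 = i := by omega
  have e1 := rowsW_single D n (h-1)
  rw [hh] at e1
  have e2 := rowsW_single D n (i-1)
  rw [hii] at e2
  have e3 : seg D h 0 n = seg D h k n ++ (seg D h (k-1) k ++ seg D h 0 (k-1)) := by
    rw [seg_split D h (Nat.zero_le k) hkn,
      seg_split D h (show (0:ℕ) ≤ k-1 by omega) (show k-1 ≤ k by omega)]
  have e4 : seg D i 0 n = seg D i j n ++ (seg D i (j-1) j ++ seg D i 0 (j-1)) := by
    rw [seg_split D i (Nat.zero_le j) (show j ≤ n by omega),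
      seg_split D i (show (0:ℕ) ≤ j-1 by omega) (show j-1 ≤ j by omega)]
  rw [word_eq,
    rowsW_split D n (show (0:ℕ) ≤ h-1 by omega) (show h-1 ≤ n by omega),
    rowsW_split D n (show h-1 ≤ h by omega) (show h ≤ n by omega),
    rowsW_split D n (show h ≤ i-1 by omega) (show i-1 ≤ n by omega),
    rowsW_split D n (show i-1 ≤ i by omega) (show i ≤ n by omega),
    e1, e2, e3, e4]
  simp only [List.append_assoc]

lemma ladder_step_RPD {n : ℕ} {w : Equiv.Perm ℕ} {D : PipeDream} (hD : D ∈ RPD n w)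
    {i j : ℕ} (hlm : LadderMovable n D i j) : ladderMove n D i j ∈ RPD n w := by
  obtain ⟨hst, hperm, hcount⟩ := hD
  obtain ⟨hmov, hiff⟩ := hlm
  obtain ⟨hh1, hhi, hhb⟩ := hIdx_spec hmov
  obtain ⟨hk1, hkn, hkb⟩ := kIdx_spec hst hmov
  obtain ⟨hi1, hj1, hijn⟩ := hst i j hmov.1
  have hin : i ≤ n := by omega
  set h := hIdx D i j with hh
  set k := kIdx n D i j with hk
  have P3 : ∀ r c, h < r → r < i → j ≤ c → c ≤ k → D (r, c) = true := by
    intro r c hr1 hr2 hc1 hc2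
    by_contra hc
    rw [Bool.not_eq_true] at hc
    have := (hiff r c (mem_Rect.2 ⟨by omega, by omega, hc1, hc2⟩)).1 hc
    rcases this with h' | h' | h' <;> (rw [Prod.mk.injEq] at h'; omega)
  have P4 : ∀ c, j < c → c < k → D (i, c) = true := fun c hc1 hc2 => kIdx_cross hkn hc1 hc2
  have P5 : ∀ c, j < c → c < k → D (h, c) = true := by
    intro c hc1 hc2
    by_contra hc
    rw [Bool.not_eq_true] at hc
    have := (hiff h c (mem_Rect.2 ⟨le_refl h, by omega, by omega, by omega⟩)).1 hc
    rcases this with h' | h' | h' <;> (rw [Prod.mk.injEq] at h'; omega)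
  have Phk : D (h, k) = false :=
    (hiff h k (mem_Rect.2 ⟨le_refl h, by omega, by omega, le_refl k⟩)).2 (Or.inr (Or.inl rfl))
  have hnehk : ((h : ℕ), (k : ℕ)) ≠ ((i : ℕ), (j : ℕ)) := by
    rw [Ne, Prod.mk.injEq]; omega
  set D' := ladderMove n D i j with hD'
  have hD'self : D' (i, j) = false := ladderMove_self n D i j
  have hD'corner : D' (h, k) = true := ladderMove_corner n D i j hnehk
  have hoth : ∀ st : ℕ × ℕ, st ≠ (i, j) → st ≠ ((h : ℕ), k) → D' st = D st :=
    fun st a b => ladderMove_other n D i j a b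
  have e1 := word_decomp D hh1 hhi hin hj1 (show j < k by omega) hkn
  have e2 := word_decomp D' hh1 hhi hin hj1 (show j < k by omega) hkn
  have cA : rowsW D' n 0 (h-1) = rowsW D n 0 (h-1) :=
    rowsW_congr (fun R c hR1 hR2 => hoth (R, c)
      (by rw [Ne, Prod.mk.injEq]; omega) (by rw [Ne, Prod.mk.injEq]; omega))
  have cH : seg D' h k n = seg D h k n :=
    seg_congr (fun c hc1 hc2 => hoth (h, c)
      (by rw [Ne, Prod.mk.injEq]; omega) (by rw [Ne, Prod.mk.injEq]; omega))
  have cZ1 : seg D' h 0 (k-1) = seg D h 0 (k-1) :=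
    seg_congr (fun c hc1 hc2 => hoth (h, c)
      (by rw [Ne, Prod.mk.injEq]; omega) (by rw [Ne, Prod.mk.injEq]; omega))
  have cZ2 : rowsW D' n h (i-1) = rowsW D n h (i-1) :=
    rowsW_congr (fun R c hR1 hR2 => hoth (R, c)
      (by rw [Ne, Prod.mk.injEq]; omega) (by rw [Ne, Prod.mk.injEq]; omega))
  have cZ3 : seg D' i j n = seg D i j n :=
    seg_congr (fun c hc1 hc2 => hoth (i, c)
      (by rw [Ne, Prod.mk.injEq]; omega) (by rw [Ne, Prod.mk.injEq]; omega))
  have cSI : seg D' i 0 (j-1) = seg D i 0 (j-1) :=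
    seg_congr (fun c hc1 hc2 => hoth (i, c)
      (by rw [Ne, Prod.mk.injEq]; omega) (by rw [Ne, Prod.mk.injEq]; omega))
  have cB : rowsW D' n i n = rowsW D n i n :=
    rowsW_congr (fun R c hR1 hR2 => hoth (R, c)
      (by rw [Ne, Prod.mk.injEq]; omega) (by rw [Ne, Prod.mk.injEq]; omega))
  have hmH : seg D h (k-1) k = [] := by
    rw [seg_col D h (show 1 ≤ k by omega), if_neg (by simp [Phk])]
  have hmH' : seg D' h (k-1) k = [h + k - 1] := by
    rw [seg_col D' h (show 1 ≤ k by omega), if_pos hD'corner]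
  have hmI : seg D i (j-1) j = [i + j - 1] := by
    rw [seg_col D i hj1, if_pos hmov.1]
  have hmI' : seg D' i (j-1) j = [] := by
    rw [seg_col D' i hj1, if_neg (by simp [hD'self])]
  rw [cA, cH, cZ1, cZ2, cZ3, cSI, cB, hmH', hmI'] at e2
  rw [hmH, hmI] at e1
  have hz := z_conj D (n := n) hhi hj1 (show j < k by omega) hkn hhb P3 P4 P5 hkb
  have hst' : InStaircase n D' := by
    intro r c hc
    by_cases h1 : (r, c) = ((h : ℕ), k)
    · rw [Prod.mk.injEq] at h1
      obtain ⟨rfl, rfl⟩ := h1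
      refine ⟨hh1, by omega, ?_⟩
      by_cases hkj : k = j + 1
      · omega
      · have := hst i (k-1) (P4 (k-1) (by omega) (by omega))
        omega
    · by_cases h2 : (r, c) = ((i : ℕ), j)
      · rw [h2] at hc
        rw [hD'] at hc
        rw [ladderMove_self] at hc
        cases hc
      · rw [hD', ladderMove_other n D i j h2 h1] at hc
        exact hst r c hc
  have hperm' : perm n D' = perm n D := by
    rw [perm_eq_sprod, perm_eq_sprod, e1, e2]
    simp only [sprod_append, sprod_nil, sprod_single, one_mul, mul_one, mul_assoc]
    rw [show h + k - 1 + 1 = h + k from by omega, show i + j - 1 + 1 = i + j from by omega]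
    have hzT := congrArg
      (fun g => g * (sprod (seg D i 0 (j-1)) * sprod (rowsW D n i n))) hz
    simp only [sprod_append, mul_assoc] at hzT
    rw [hzT]
  have hcc : crossCount n D' = crossCount n D := by
    unfold crossCount
    rw [e1, e2]
    simp only [List.length_append, List.length_cons, List.length_nil]
    omega
  exact ⟨hst', by rw [hperm']; exact hperm, by rw [hcc, hcount]⟩

lemma degen_bump {n : ℕ} {w : Equiv.Perm ℕ} {D : PipeDream} (hD : D ∈ RPD n w)
    {i j : ℕ} (hmov : Movable D i j)
    (hmax : maxBumpRow n D i j = hIdx D i j) (hmin : minBumpCol n D i j = kIdx n D i j) :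
    D (hIdx D i j, kIdx n D i j) = false := by
  obtain ⟨hst, hperm, hcount⟩ := hD
  obtain ⟨hh1, hhi, hhb⟩ := hIdx_spec hmov
  obtain ⟨hk1, hkn, hkb⟩ := kIdx_spec hst hmov
  obtain ⟨hi1, hj1, hijn⟩ := hst i j hmov.1
  have hin : i ≤ n := by omega
  set h := hIdx D i j with hh
  set k := kIdx n D i j with hk
  by_contra hcon
  rw [Bool.not_eq_false] at hcon
  have P3 : ∀ r c, h < r → r < i → j ≤ c → c ≤ k → D (r, c) = true := by
    intro r c hr1 hr2 hc1 hc2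
    by_contra hc
    rw [Bool.not_eq_true] at hc
    have := le_maxBumpRow (n := n) (by omega) hr2 hc1 hc2 hc
    omega
  have P4 : ∀ c, j < c → c < k → D (i, c) = true := fun c hc1 hc2 => kIdx_cross hkn hc1 hc2
  have P5 : ∀ c, j < c → c < k → D (h, c) = true := by
    intro c hc1 hc2
    by_contra hc
    rw [Bool.not_eq_true] at hc
    have := minBumpCol_le (n := n) (by omega) (by omega) (le_refl h) (by omega) hc
    omega
  have hz := z_conj D (n := n) hhi hj1 (show j < k by omega) hkn hhb P3 P4 P5 hkb
  have e1 := word_decomp D hh1 hhi hin hj1 (show j < k by omega) hkn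
  have hmH : seg D h (k-1) k = [h + k - 1] := by
    rw [seg_col D h (show 1 ≤ k by omega), if_pos hcon]
  have hmI : seg D i (j-1) j = [i + j - 1] := by
    rw [seg_col D i hj1, if_pos hmov.1]
  rw [hmH, hmI] at e1
  set L' : List ℕ := rowsW D n 0 (h-1) ++ (seg D h k n ++
      ((seg D h 0 (k-1) ++ (rowsW D n h (i-1) ++ seg D i j n)) ++
      (seg D i 0 (j-1) ++ rowsW D n i n))) with hL'
  have hsp : sprod L' = w := by
    rw [← hperm, perm_eq_sprod, e1, hL']
    simp only [sprod_append, sprod_single, mul_assoc]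
    rw [show h + k - 1 + 1 = h + k from by omega, show i + j - 1 + 1 = i + j from by omega]
    have hz2 := congrArg
      (fun g => g * (Equiv.swap (i+j-1) (i+j) *
        (sprod (seg D i 0 (j-1)) * sprod (rowsW D n i n)))) hz
    simp only [sprod_append, mul_assoc] at hz2
    rw [hz2, Equiv.swap_mul_self_mul]
  have hlen : (word n D).length = L'.length + 2 := by
    rw [e1, hL']
    simp only [List.length_append, List.length_cons, List.length_nil]
    omega
  have hc1 := invCount_sprod_le L' n
  rw [hsp] at hc1
  have hcw : crossCount n D = (word n D).length := rfl
  omega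

lemma maxBumpRow_bump {n : ℕ} {D : PipeDream} {i j : ℕ} (hm : Movable D i j)
    (hjk : j ≤ kIdx n D i j) :
    ∃ q, j ≤ q ∧ q ≤ kIdx n D i j ∧ D (maxBumpRow n D i j, q) = false := by
  obtain ⟨hh1, hhi, hhb⟩ := hIdx_spec hm
  have hne : ((Finset.Ico (hIdx D i j) i).filter
      (fun p => ∃ q ∈ Finset.Icc j (kIdx n D i j), D (p, q) = false)).Nonempty := by
    refine ⟨hIdx D i j, ?_⟩
    simp only [Finset.mem_filter, Finset.mem_Ico, Finset.mem_Icc]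
    exact ⟨⟨le_refl _, hhi⟩, j, ⟨le_refl j, hjk⟩, hhb⟩
  obtain ⟨b, hb', he⟩ := Finset.exists_mem_eq_sup _ hne (id : ℕ → ℕ)
  unfold maxBumpRow
  rw [he]
  simp only [Finset.mem_filter, Finset.mem_Ico, Finset.mem_Icc] at hb'
  obtain ⟨-, q, hq, hbq⟩ := hb'
  exact ⟨q, hq.1, hq.2, hbq⟩

lemma minBumpCol_bump {n : ℕ} {D : PipeDream} {i j : ℕ} (hm : Movable D i j)
    (hjk : j + 1 ≤ kIdx n D i j) (hkb : D (i, kIdx n D i j) = false) :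
    ∃ p, hIdx D i j ≤ p ∧ p ≤ i ∧ D (p, minBumpCol n D i j) = false := by
  obtain ⟨hh1, hhi, hhb⟩ := hIdx_spec hm
  have hmem : kIdx n D i j ∈ (Finset.Icc (j+1) (kIdx n D i j)).filter
      (fun q => ∃ p ∈ Finset.Icc (hIdx D i j) i, D (p, q) = false) := by
    simp only [Finset.mem_filter, Finset.mem_Icc]
    exact ⟨⟨hjk, le_refl _⟩, i, ⟨by omega, le_refl i⟩, hkb⟩
  unfold minBumpCol
  rcases hq : ((Finset.Icc (j+1) (kIdx n D i j)).filter
      (fun q => ∃ p ∈ Finset.Icc (hIdx D i j) i, D (p, q) = false)).min with _ | m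
  · exact absurd (Finset.min_eq_top.1 hq) (Finset.ne_empty_of_mem hmem)
  · have hmm := Finset.mem_of_min hq
    simp only [Finset.mem_filter, Finset.mem_Icc] at hmm
    obtain ⟨-, p, hp, hbp⟩ := hmm
    exact ⟨p, hp.1, hp.2, hbp⟩

lemma rtg_RPD {n : ℕ} {w : Equiv.Perm ℕ} {i j : ℕ} {D Q : PipeDream} (hD : D ∈ RPD n w)
    (hr : Relation.ReflTransGen (LadderStepNE n i j) D Q) : Q ∈ RPD n w := by
  induction hr with
  | refl => exact hD
  | tail hpre hstep ih =>
    obtain ⟨p, q, _, _, hlm, rfl⟩ := hstep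
    exact ladder_step_RPD ih hlm

lemma fwd_main (n : ℕ) (w : Equiv.Perm ℕ) :
    ∀ m : ℕ, ∀ D : PipeDream, ∀ i j : ℕ, D ∈ RPD n w → Movable D i j →
      (i - hIdx D i j) + (kIdx n D i j - j) ≤ m →
      ∃ Q, Relation.ReflTransGen (LadderStepNE n i j) D Q ∧ Q (i, j) = false ∧
        (∀ r c, i < r ∨ c < j → Q (r, c) = D (r, c)) := by
  intro m
  induction m with
  | zero =>
    intro D i j hD hmov hμ
    obtain ⟨hk1, hkn, hkb⟩ := kIdx_spec hD.1 hmov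
    omega
  | succ m IH =>
    intro D i j hD hmov hμ
    have hst : InStaircase n D := hD.1
    obtain ⟨hh1, hhi, hhb⟩ := hIdx_spec hmov
    obtain ⟨hk1, hkn, hkb⟩ := kIdx_spec hst hmov
    obtain ⟨hi1, hj1, hijn⟩ := hst i j hmov.1
    set h := hIdx D i j with hh
    set k := kIdx n D i j with hk
    obtain ⟨ha1, ha2⟩ := maxBumpRow_spec (n := n) hmov (by omega)
    set a := maxBumpRow n D i j with haa
    by_cases hcase1 : h < a
    · -- Case (ii): recurse at (a, j), then again at (i, j).
      have hDaj : D (a, j) = true := hIdx_cross (by omega) ha2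
      have hmov2 : Movable D a j := ⟨hDaj, h, hh1, by omega, hhb⟩
      have hha : hIdx D a j = h := by
        apply le_antisymm
        · by_contra hcon
          push_neg at hcon
          have hsp := hIdx_spec hmov2
          have hc2 : D (hIdx D a j, j) = true := hIdx_cross (i := i) (by omega) (by omega)
          rw [hsp.2.2] at hc2; cases hc2
        · exact hIdx_le hh1 (by omega) hhb
      obtain ⟨q0, hq01, hq02, hq03⟩ := maxBumpRow_bump (n := n) hmov (by omega)
      have hq0j : j < q0 := by
        rcases Nat.lt_or_ge j q0 with h' | h'
        · exact h'
        · exfalso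
          have : q0 = j := by omega
          rw [this, hDaj] at hq03; cases hq03
      have hka : kIdx n D a j ≤ k :=
        le_trans (kIdx_le_of_bump (by omega) (by omega) hq03) hq02
      obtain ⟨hm1, hm2, hm3⟩ := kIdx_spec hst hmov2
      obtain ⟨Q1, hr1, hq1, hpres1⟩ := IH D a j ⟨hst, hD.2⟩ hmov2 (by rw [hha]; omega)
      have hQ1rpd : Q1 ∈ RPD n w := rtg_RPD ⟨hst, hD.2⟩ hr1
      have hmovQ1 : Movable Q1 i j := by
        refine ⟨?_, a, by omega, by omega, hq1⟩
        rw [hpres1 i j (Or.inl (by omega))]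
        exact hmov.1
      have hQh : hIdx Q1 i j = a := by
        apply le_antisymm
        · by_contra hcon
          push_neg at hcon
          have hsp := hIdx_spec hmovQ1
          have hc1 : Q1 (hIdx Q1 i j, j) = D (hIdx Q1 i j, j) := hpres1 _ _ (Or.inl hcon)
          rw [hsp.2.2] at hc1
          have hc2 : D (hIdx Q1 i j, j) = true := hIdx_cross (i := i) (by omega) hsp.2.1
          rw [hc2] at hc1; cases hc1
        · exact hIdx_le (by omega) (by omega) hq1
      have hfil : (Finset.Icc (j+1) n).filter (fun c => Q1 (i, c) = false)
          = (Finset.Icc (j+1) n).filter (fun c => D (i, c) = false) := by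
        apply Finset.filter_congr
        intro c _
        rw [hpres1 i c (Or.inl (by omega))]
      have hQk : kIdx n Q1 i j = k := by
        rw [hk]
        unfold kIdx
        rw [hfil]
      obtain ⟨Q2, hr2, hq2, hpres2⟩ := IH Q1 i j hQ1rpd hmovQ1 (by rw [hQh, hQk]; omega)
      have hr1' : Relation.ReflTransGen (LadderStepNE n i j) D Q1 :=
        Relation.ReflTransGen.mono (fun x y hxy => by
          obtain ⟨p, q, hp, hq, hlm, he⟩ := hxy
          exact ⟨p, q, by omega, hq, hlm, he⟩) _ _ hr1
      refine ⟨Q2, hr1'.trans hr2, hq2, ?_⟩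
      intro r c hrc
      rw [hpres2 r c hrc]
      rcases hrc with h' | h'
      · exact hpres1 r c (Or.inl (by omega))
      · exact hpres1 r c (Or.inr h')
    · -- now maxBumpRow = h
      have hmaxh : maxBumpRow n D i j = h := by omega
      have P3 : ∀ r c, h < r → r < i → j ≤ c → c ≤ k → D (r, c) = true := by
        intro r c hr1 hr2 hc1 hc2
        by_contra hc
        rw [Bool.not_eq_true] at hc
        have := le_maxBumpRow (n := n) (by omega) hr2 hc1 hc2 hc
        omega
      have P4 : ∀ c, j < c → c < k → D (i, c) = true := fun c hc1 hc2 =>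
        kIdx_cross hkn hc1 hc2
      obtain ⟨hb1, hb2⟩ := minBumpCol_spec (n := n) hmov (by omega) hkb
      set b := minBumpCol n D i j with hbb
      by_cases hcase2 : b < k
      · -- Case (iii): recurse at (i, b), then again at (i, j).
        obtain ⟨p0, hp01, hp02, hp03⟩ := minBumpCol_bump (n := n) hmov (by omega) hkb
        have hp0h : p0 = h := by
          rcases Nat.lt_or_ge p0 i with h' | h'
          · rcases Nat.lt_or_ge h p0 with h'' | h''
            · exfalso
              have := P3 p0 b h'' h' (by omega) (by omega)
              rw [this] at hp03; cases hp03
            · omega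
          · exfalso
            have hpi : p0 = i := by omega
            rw [hpi] at hp03
            have := P4 b (by omega) (by omega)
            rw [this] at hp03; cases hp03
        have Phb : D (h, b) = false := by rw [← hp0h]; exact hp03
        have hDib : D (i, b) = true := P4 b (by omega) (by omega)
        have hmov3 : Movable D i b := ⟨hDib, h, hh1, hhi, Phb⟩
        have hhib : hIdx D i b = h := by
          apply le_antisymm
          · by_contra hcon
            push_neg at hcon
            have hsp := hIdx_spec hmov3
            have := P3 (hIdx D i b) b (by omega) hsp.2.1 (by omega) (by omega)
            rw [hsp.2.2] at this; cases this
          · exact hIdx_le hh1 hhi Phb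
        have hkib : kIdx n D i b = k := by
          obtain ⟨hn1, hn2, hn3⟩ := kIdx_spec hst hmov3
          apply le_antisymm
          · exact kIdx_le_of_bump (by omega) (by omega) hkb
          · by_contra hcon
            push_neg at hcon
            have := P4 (kIdx n D i b) (by omega) (by omega)
            rw [hn3] at this; cases this
        obtain ⟨Q1, hr1, hq1, hpres1⟩ := IH D i b ⟨hst, hD.2⟩ hmov3
          (by rw [hhib, hkib]; omega)
        have hQ1rpd : Q1 ∈ RPD n w := rtg_RPD ⟨hst, hD.2⟩ hr1
        have hcol : ∀ r, Q1 (r, j) = D (r, j) := fun r => hpres1 r j (Or.inr (by omega))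
        have hmovQ1 : Movable Q1 i j := by
          refine ⟨?_, h, hh1, hhi, ?_⟩
          · rw [hcol i]; exact hmov.1
          · rw [hcol h]; exact hhb
        have hfil : (Finset.Ico 1 i).filter (fun r => Q1 (r, j) = false)
            = (Finset.Ico 1 i).filter (fun r => D (r, j) = false) := by
          apply Finset.filter_congr
          intro r _
          rw [hcol r]
        have hQh : hIdx Q1 i j = h := by
          rw [hh]
          unfold hIdx
          rw [hfil]
        have hQk : kIdx n Q1 i j = b := by
          apply le_antisymm
          · exact kIdx_le_of_bump (by omega) (by omega) hq1
          · by_contra hcon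
            push_neg at hcon
            obtain ⟨hn1, hn2, hn3⟩ := kIdx_spec hQ1rpd.1 hmovQ1
            have hc1 : Q1 (i, kIdx n Q1 i j) = D (i, kIdx n Q1 i j) :=
              hpres1 _ _ (Or.inr hcon)
            rw [hn3] at hc1
            have hc2 := P4 (kIdx n Q1 i j) (by omega) (by omega)
            rw [hc2] at hc1; cases hc1
        obtain ⟨Q2, hr2, hq2, hpres2⟩ := IH Q1 i j hQ1rpd hmovQ1 (by rw [hQh, hQk]; omega)
        have hr1' : Relation.ReflTransGen (LadderStepNE n i j) D Q1 :=
          Relation.ReflTransGen.mono (fun x y hxy => by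
            obtain ⟨p, q, hp, hq, hlm, he⟩ := hxy
            exact ⟨p, q, hp, by omega, hlm, he⟩) _ _ hr1
        refine ⟨Q2, hr1'.trans hr2, hq2, ?_⟩
        intro r c hrc
        rw [hpres2 r c hrc]
        rcases hrc with h' | h'
        · exact hpres1 r c (Or.inl h')
        · exact hpres1 r c (Or.inr (by omega))
      · -- Base case: one generalized ladder move at (i, j).
        have hminh : minBumpCol n D i j = k := by omega
        have Phk : D (h, k) = false := degen_bump ⟨hst, hD.2⟩ hmov hmaxh hminh
        have P5 : ∀ c, j < c → c < k → D (h, c) = true := by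
          intro c hc1 hc2
          by_contra hc
          rw [Bool.not_eq_true] at hc
          have := minBumpCol_le (n := n) (by omega) (by omega) (le_refl h) (by omega) hc
          omega
        have hlm : LadderMovable n D i j := by
          refine ⟨hmov, ?_⟩
          intro p q hpq
          rw [mem_Rect] at hpq
          constructor
          · intro hbump
            by_cases hp1 : p = h
            · by_cases hq1 : q = j
              · exact Or.inl (by rw [hp1, hq1])
              · by_cases hq2 : q = k
                · exact Or.inr (Or.inl (by rw [hp1, hq2]))
                · exfalso
                  have := P5 q (by omega) (by omega)
                  rw [hp1, this] at hbump; cases hbump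
            · by_cases hp2 : p = i
              · by_cases hq2 : q = k
                · exact Or.inr (Or.inr (by rw [hp2, hq2]))
                · exfalso
                  by_cases hq1 : q = j
                  · rw [hp2, hq1, hmov.1] at hbump; cases hbump
                  · have := P4 q (by omega) (by omega)
                    rw [hp2, this] at hbump; cases hbump
              · exfalso
                have := P3 p q (by omega) (by omega) (by omega) (by omega)
                rw [this] at hbump; cases hbump
          · intro hc
            rcases hc with h' | h' | h'
            · rw [Prod.mk.injEq] at h'
              obtain ⟨rfl, rfl⟩ := h'
              exact hhb
            · rw [Prod.mk.injEq] at h'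
              obtain ⟨rfl, rfl⟩ := h'
              exact Phk
            · rw [Prod.mk.injEq] at h'
              obtain ⟨rfl, rfl⟩ := h'
              exact hkb
        refine ⟨ladderMove n D i j,
          Relation.ReflTransGen.single ⟨i, j, le_refl i, le_refl j, hlm, rfl⟩,
          ladderMove_self n D i j, ?_⟩
        intro r c hrc
        apply ladderMove_other
        · rw [Ne, Prod.mk.injEq]; omega
        · rw [Ne, Prod.mk.injEq]; omega

lemma backward_inv {n : ℕ} {D : PipeDream} {i j : ℕ} (hcross : D (i, j) = true)
    (hnm : ¬ Movable D i j) {Q : PipeDream}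
    (hr : Relation.ReflTransGen (LadderStepNE n i j) D Q) :
    Q (i, j) = true ∧ ∀ h', 1 ≤ h' → h' < i → Q (h', j) = true := by
  induction hr with
  | refl =>
    refine ⟨hcross, ?_⟩
    intro h' h1 h2
    by_contra hc
    rw [Bool.not_eq_true] at hc
    exact hnm ⟨hcross, h', h1, h2, hc⟩
  | @tail E Q' hpre hstep ih =>
    obtain ⟨p, q, hp, hq, hlm, rfl⟩ := hstep
    obtain ⟨ihc, ihcol⟩ := ih
    obtain ⟨hhp1, hhp2, hhp3⟩ := hIdx_spec hlm.1
    have hcornerne : ((hIdx E p q : ℕ), (kIdx n E p q : ℕ)) ≠ ((p : ℕ), (q : ℕ)) := by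
      rw [Ne, Prod.mk.injEq]; omega
    constructor
    · by_cases h1 : ((i : ℕ), (j : ℕ)) = ((p : ℕ), (q : ℕ))
      · exfalso
        rw [Prod.mk.injEq] at h1
        obtain ⟨h1a, h1b⟩ := h1
        obtain ⟨-, h', hx1, hx2, hx3⟩ := hlm.1
        rw [← h1b] at hx3
        rw [ihcol h' hx1 (by omega)] at hx3
        cases hx3
      · by_cases h2 : ((i : ℕ), (j : ℕ)) = ((hIdx E p q : ℕ), (kIdx n E p q : ℕ))
        · rw [h2]
          exact ladderMove_corner n E p q hcornerne
        · rw [ladderMove_other n E p q h1 h2]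
          exact ihc
    · intro h' h1 h2
      by_cases hc1 : ((h' : ℕ), (j : ℕ)) = ((p : ℕ), (q : ℕ))
      · exfalso
        rw [Prod.mk.injEq] at hc1
        obtain ⟨hc1a, hc1b⟩ := hc1
        obtain ⟨-, h'', hx1, hx2, hx3⟩ := hlm.1
        rw [← hc1b] at hx3
        rw [ihcol h'' hx1 (by omega)] at hx3
        cases hx3
      · by_cases hc2 : ((h' : ℕ), (j : ℕ)) = ((hIdx E p q : ℕ), (kIdx n E p q : ℕ))
        · rw [hc2]
          exact ladderMove_corner n E p q hcornerne
        · rw [ladderMove_other n E p q hc1 hc2]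
          exact ihcol h' h1 h2

end PipeDream

open PipeDream in
/-- a cross tile (i,j) is movable iff V_{ij}(D) is nonempty. -/
theorem stmt8 (n : ℕ) (w : Equiv.Perm ℕ) (D : PipeDream) (hD : D ∈ RPD n w)
    (i j : ℕ) (hcross : D (i, j) = true) :
    Movable D i j ↔ (V n D i j).Nonempty := by
  constructor
  · intro hmov
    obtain ⟨Q, hr, hq, -⟩ := fwd_main n w
      ((i - hIdx D i j) + (kIdx n D i j - j)) D i j hD hmov (le_refl _)
    exact ⟨Q, hr, hq⟩
  · rintro ⟨Q, hr, hq⟩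
    by_contra hnm
    have h1 := (backward_inv hcross hnm hr).1
    rw [hq] at h1
    cases h1
end

section
/- Let D be a reduced pipe dream in which the cross tile (i,j) is not movable (no bump tile lies above (i,j) in column j). Then for every pipe dream Q obtained from D by any sequence of generalized ladder moves, Q(i,j) remains a cross tile; i.e., no sequence of generalized ladder moves can turn (i,j) into a bump tile. -/
open Finset

open PipeDream in
/-- if no bump lies above the cross (i,j) in column j, then no
sequence of generalized ladder moves can ever turn (i,j) into a bump tile. -/
theorem stmt9 (n : ℕ) (w : Equiv.Perm ℕ) (D : PipeDream) (hD : D ∈ RPD n w)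
    (i j : ℕ) (hcross : D (i, j) = true)
    (hnm : ∀ h, 1 ≤ h → h < i → D (h, j) = true) :
    ∀ Q : PipeDream, ladderLE n D Q → Q (i, j) = true := by
  have key : ∀ Q, ladderLE n D Q → ∀ h, 1 ≤ h → h ≤ i → Q (h, j) = true := by
    intro Q hQ
    induction hQ with
    | refl =>
        intro h h1 h2
        rcases eq_or_lt_of_le h2 with rfl | hlt
        · exact hcross
        · exact hnm h h1 hlt
    | tail _ step ih =>
        obtain ⟨p, q, hmov, rfl⟩ := step
        intro h h1 h2
        unfold ladderMove
        by_cases heq : ((h : ℕ), j) = (p, q)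
        · exfalso
          obtain ⟨hp, hq⟩ := Prod.mk.injEq .. ▸ heq
          subst hp; subst hq
          obtain ⟨_, h', h'1, h'lt, hbump⟩ := hmov.1
          exact absurd (ih h' h'1 (le_trans (le_of_lt h'lt) h2)) (by simp [hbump])
        · simp only [heq, if_false]
          split
          · rfl
          · exact ih h h1 h2
  intro Q hQ
  exact key Q hQ i (by
    have := (hD.1 i j hcross); exact this.1) le_rfl
end

section
/- Let D be a reduced pipe dream with movable cross tile (i,j), and assume that for all Q > D in the ladder-move order and all movable (p,q) in Q, M_{pq}(Q) is the unique minimal element of V_{pq}(Q), and similarly for all movable (p,q) ≠ (i,j) northeast of (i,j) in D. If (i,j) is ladder movable in D, then L_{ij}(D) is the unique minimal element of V_{ij}(D): for every Q ∈ V_{ij}(D), L_{ij}(D) ≤ Q. -/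
open Finset

namespace PipeDream

lemma pne1 {a b c d : ℕ} (h : a ≠ c) : (a, b) ≠ (c, d) := by
  simp [Prod.ext_iff]; intro hh; exact absurd hh h

lemma pne2 {a b c d : ℕ} (h : b ≠ d) : (a, b) ≠ (c, d) := by
  simp [Prod.ext_iff]; intro _; exact h

lemma hIdx_eq_of (D : PipeDream) {i j a : ℕ} (h1 : 1 ≤ a) (h2 : a < i)
    (hb : D (a, j) = false) (hmax : ∀ r, a < r → r < i → D (r, j) = true) :
    hIdx D i j = a := by
  unfold hIdx
  apply le_antisymm
  · apply Finset.sup_le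
    intro x hx
    simp only [Finset.mem_filter, Finset.mem_Ico] at hx
    by_contra hlt
    push_neg at hlt
    have := hmax x hlt hx.1.2
    rw [this] at hx; exact absurd hx.2 (by simp)
  · apply Finset.le_sup (f := id)
    simp only [Finset.mem_filter, Finset.mem_Ico]
    exact ⟨⟨h1, h2⟩, hb⟩

lemma kIdx_eq_of (n : ℕ) (D : PipeDream) {i j b : ℕ} (h1 : j + 1 ≤ b) (h2 : b ≤ n)
    (hb : D (i, b) = false) (hmin : ∀ c, j < c → c < b → D (i, c) = true) :
    kIdx n D i j = b := by
  unfold kIdx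
  have : (((Finset.Icc (j + 1) n).filter (fun k => D (i, k) = false)).min) = (b : WithTop ℕ) := by
    apply le_antisymm
    · apply Finset.min_le
      simp only [Finset.mem_filter, Finset.mem_Icc]
      exact ⟨⟨h1, h2⟩, hb⟩
    · apply Finset.le_min
      intro c hc
      simp only [Finset.mem_filter, Finset.mem_Icc] at hc
      by_contra hlt
      have hcb : c < b := WithTop.coe_lt_coe.mp (not_le.mp hlt)
      have := hmin c (by omega) hcb
      rw [this] at hc; exact absurd hc.2 (by simp)
  rw [this]; exact WithTop.untopD_coe 0 b

lemma maxBumpRow_eq_of (n : ℕ) (D : PipeDream) {i j a : ℕ} (hh : hIdx D i j ≤ a) (ha : a < i)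
    (hbump : ∃ c, j ≤ c ∧ c ≤ kIdx n D i j ∧ D (a, c) = false)
    (hmax : ∀ r, a < r → r < i → ∀ c, j ≤ c → c ≤ kIdx n D i j → D (r, c) = true) :
    maxBumpRow n D i j = a := by
  unfold maxBumpRow
  apply le_antisymm
  · apply Finset.sup_le
    intro x hx
    simp only [Finset.mem_filter, Finset.mem_Ico] at hx
    by_contra hlt
    push_neg at hlt
    obtain ⟨c, hc1, hc2⟩ := hx.2
    simp only [Finset.mem_Icc] at hc1
    have := hmax x hlt hx.1.2 c hc1.1 hc1.2
    rw [this] at hc2; exact absurd hc2 (by simp)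
  · apply Finset.le_sup (f := id)
    simp only [Finset.mem_filter, Finset.mem_Ico]
    obtain ⟨c, hc1, hc2, hc3⟩ := hbump
    exact ⟨⟨hh, ha⟩, c, Finset.mem_Icc.mpr ⟨hc1, hc2⟩, hc3⟩

lemma minBumpCol_eq_of (n : ℕ) (D : PipeDream) {i j b : ℕ} (hb1 : j + 1 ≤ b)
    (hb2 : b ≤ kIdx n D i j)
    (hbump : ∃ p, hIdx D i j ≤ p ∧ p ≤ i ∧ D (p, b) = false)
    (hmin : ∀ c, j < c → c < b → ∀ p, hIdx D i j ≤ p → p ≤ i → D (p, c) = true) :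
    minBumpCol n D i j = b := by
  unfold minBumpCol
  have : (((Finset.Icc (j + 1) (kIdx n D i j)).filter
      (fun q => ∃ p ∈ Finset.Icc (hIdx D i j) i, D (p, q) = false)).min) = (b : WithTop ℕ) := by
    apply le_antisymm
    · apply Finset.min_le
      simp only [Finset.mem_filter, Finset.mem_Icc]
      obtain ⟨p, hp1, hp2, hp3⟩ := hbump
      exact ⟨⟨hb1, hb2⟩, p, ⟨hp1, hp2⟩, hp3⟩
    · apply Finset.le_min
      intro c hc
      simp only [Finset.mem_filter, Finset.mem_Icc] at hc
      by_contra hlt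
      have hcb : c < b := WithTop.coe_lt_coe.mp (not_le.mp hlt)
      obtain ⟨p, hp1, hp2⟩ := hc.2
      have := hmin c (by omega) hcb p hp1.1 hp1.2
      rw [this] at hp2; exact absurd hp2 (by simp)
  rw [this]; exact WithTop.untopD_coe 0 b

end PipeDream
namespace PipeDream
lemma pneOr {a b c d : ℕ} (h : a ≠ c ∨ b ≠ d) : (a, b) ≠ (c, d) := by
  rcases h with h | h
  exacts [pne1 h, pne2 h]
lemma upd_fst {D : PipeDream} {P1 P2 : ℕ × ℕ} :
    (fun st => if st = P1 then false else if st = P2 then true else D st) P1 = false := by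
  simp
lemma upd_mid {D : PipeDream} {P1 P2 : ℕ × ℕ} (hne : P2 ≠ P1) :
    (fun st => if st = P1 then false else if st = P2 then true else D st) P2 = true := by
  simp [hne]
lemma pOrne {a b c d : ℕ} (h : (a, b) ≠ (c, d)) : a ≠ c ∨ b ≠ d := by
  by_cases h1 : a = c
  · right; intro h2; exact h (by rw [h1, h2])
  · left; exact h1
end PipeDream
namespace PipeDream

/-- The full "picture" of a ladder movable position. -/
structure LMPic (n : ℕ) (D : PipeDream) (i j h k : ℕ) : Prop where
  h1 : 1 ≤ h
  hi : h < i
  jk : j < k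
  kn : k ≤ n
  cij : D (i, j) = true
  bhj : D (h, j) = false
  bhk : D (h, k) = false
  bik : D (i, k) = false
  cross : ∀ p q, h ≤ p → p ≤ i → j ≤ q → q ≤ k →
    (p ≠ h ∨ q ≠ j) → (p ≠ h ∨ q ≠ k) → (p ≠ i ∨ q ≠ k) → D (p, q) = true

lemma pic_hIdx {n : ℕ} {D : PipeDream} {i j h k : ℕ} (pic : LMPic n D i j h k) :
    hIdx D i j = h := by
  have hJK := pic.jk
  have hHI := pic.hi
  apply hIdx_eq_of D pic.h1 pic.hi pic.bhj
  intro r hr1 hr2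
  exact pic.cross r j (by omega) (by omega) le_rfl (le_of_lt pic.jk)
    (Or.inl (by omega)) (Or.inr (by omega)) (Or.inl (by omega))

lemma pic_kIdx {n : ℕ} {D : PipeDream} {i j h k : ℕ} (pic : LMPic n D i j h k) :
    kIdx n D i j = k := by
  have hJK := pic.jk
  have hHI := pic.hi
  apply kIdx_eq_of n D (by omega) pic.kn pic.bik
  intro c hc1 hc2
  exact pic.cross i c (le_of_lt pic.hi) le_rfl (by omega) (by omega)
    (Or.inl (by omega)) (Or.inl (by omega)) (Or.inr (by omega))

/-- From a picture, the position is ladder movable. -/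
lemma pic_lm {n : ℕ} {D : PipeDream} {i j h k : ℕ} (pic : LMPic n D i j h k) :
    LadderMovable n D i j := by
  have hJK := pic.jk
  have hHI := pic.hi
  have hh := pic_hIdx pic
  have hk := pic_kIdx pic
  refine ⟨⟨pic.cij, h, pic.h1, pic.hi, pic.bhj⟩, ?_⟩
  intro p q hmem
  rw [hh, hk]
  simp only [Rect, Finset.mem_Icc, Prod.mk_le_mk, hh, hk] at hmem
  obtain ⟨⟨a1, a3⟩, a2, a4⟩ := hmem
  constructor
  · intro hb
    by_contra hcor
    push_neg at hcor
    obtain ⟨c1, c2, c3⟩ := hcor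
    have := pic.cross p q a1 a2 a3 a4 ?_ ?_ ?_
    · rw [this] at hb; exact absurd hb (by simp)
    · by_contra hx; push_neg at hx; exact c1 (by rw [hx.1, hx.2])
    · by_contra hx; push_neg at hx; exact c2 (by rw [hx.1, hx.2])
    · by_contra hx; push_neg at hx; exact c3 (by rw [hx.1, hx.2])
  · rintro (h1 | h2 | h3)
    · simp only [Prod.mk.injEq] at h1; obtain ⟨rfl, rfl⟩ := h1; exact pic.bhj
    · simp only [Prod.mk.injEq] at h2; obtain ⟨rfl, rfl⟩ := h2; exact pic.bhk
    · simp only [Prod.mk.injEq] at h3; obtain ⟨rfl, rfl⟩ := h3; exact pic.bik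

/-- From a picture, the ladder move is the explicit two point modification. -/
lemma pic_ladderMove {n : ℕ} {D : PipeDream} {i j h k : ℕ} (pic : LMPic n D i j h k) :
    ladderMove n D i j = fun st =>
      if st = (i, j) then false else if st = (h, k) then true else D st := by
  unfold ladderMove
  rw [pic_hIdx pic, pic_kIdx pic]

lemma pic_maxBumpRow {n : ℕ} {D : PipeDream} {i j h k : ℕ} (pic : LMPic n D i j h k) :
    maxBumpRow n D i j = h := by
  have hJK := pic.jk
  have hHI := pic.hi
  apply maxBumpRow_eq_of n D (le_of_eq (pic_hIdx pic)) pic.hi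
  · exact ⟨j, le_rfl, by rw [pic_kIdx pic]; omega, pic.bhj⟩
  · intro r hr1 hr2 c hc1 hc2
    rw [pic_kIdx pic] at hc2
    exact pic.cross r c (by omega) (by omega) hc1 hc2
      (Or.inl (by omega)) (Or.inl (by omega)) (Or.inl (by omega))

lemma pic_minBumpCol {n : ℕ} {D : PipeDream} {i j h k : ℕ} (pic : LMPic n D i j h k) :
    minBumpCol n D i j = k := by
  have hJK := pic.jk
  have hHI := pic.hi
  apply minBumpCol_eq_of n D (by omega) (le_of_eq (pic_kIdx pic).symm)
  · exact ⟨i, by rw [pic_hIdx pic]; omega, le_rfl, pic.bik⟩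
  · intro c hc1 hc2 p hp1 hp2
    rw [pic_hIdx pic] at hp1
    exact pic.cross p c hp1 hp2 (by omega) (by omega)
      (Or.inr (by omega)) (Or.inr (by omega)) (Or.inr (by omega))

/-- With any positive fuel, the move at a ladder movable position is the ladder move. -/
lemma pic_moveAux {n : ℕ} {D : PipeDream} {i j h k : ℕ} (pic : LMPic n D i j h k)
    (m : ℕ) : moveAux n (m + 1) D i j = ladderMove n D i j := by
  show (if maxBumpRow n D i j = hIdx D i j ∧ minBumpCol n D i j = kIdx n D i j then
        ladderMove n D i j
      else if hIdx D i j < maxBumpRow n D i j then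
        moveAux n m (moveAux n m D (maxBumpRow n D i j) j) i j
      else
        moveAux n m (moveAux n m D i (minBumpCol n D i j)) i j) = _
  rw [if_pos]
  rw [pic_maxBumpRow pic, pic_hIdx pic, pic_minBumpCol pic, pic_kIdx pic]
  exact ⟨rfl, rfl⟩

lemma fuel_eq (n : ℕ) : (n + 2) ^ (n + 2) = ((n + 2) ^ (n + 2) - 2) + 2 := by
  have h : 2 ≤ (n + 2) ^ (n + 2) := by
    calc 2 ≤ n + 2 := by omega
    _ = (n + 2) ^ 1 := (pow_one _).symm
    _ ≤ (n + 2) ^ (n + 2) := Nat.pow_le_pow_right (by omega) (by omega)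
  omega

lemma pic_move {n : ℕ} {D : PipeDream} {i j h k : ℕ} (pic : LMPic n D i j h k) :
    move n D i j = ladderMove n D i j := by
  rw [move, fuel_eq n]
  exact pic_moveAux pic _

/-- Extract the picture from ladder movability (needs the staircase condition). -/
lemma lm_pic {n : ℕ} {w : Equiv.Perm ℕ} {D : PipeDream} (hD : D ∈ RPD n w) {i j : ℕ}
    (hlm : LadderMovable n D i j) :
    LMPic n D i j (hIdx D i j) (kIdx n D i j) := by
  obtain ⟨hst, -, -⟩ := hD
  obtain ⟨⟨hcross, a, ha1, ha2, ha3⟩, hiff⟩ := hlm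
  -- hIdx facts
  have hne : (((Finset.Ico 1 i).filter (fun h => D (h, j) = false))).Nonempty :=
    ⟨a, by simp only [Finset.mem_filter, Finset.mem_Ico]; exact ⟨⟨ha1, ha2⟩, ha3⟩⟩
  obtain ⟨b, hb, hbe⟩ := Finset.exists_mem_eq_sup _ hne id
  have hIdxmem : hIdx D i j ∈ ((Finset.Ico 1 i).filter (fun h => D (h, j) = false)) := by
    rw [hIdx, hbe]; exact hb
  simp only [Finset.mem_filter, Finset.mem_Ico] at hIdxmem
  obtain ⟨⟨hh1, hh2⟩, hh3⟩ := hIdxmem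
  -- kIdx facts
  obtain ⟨hi1, hj1, hij⟩ := hst i j hcross
  have hb0 : D (i, n + 2 - i) = false := by
    by_contra hc
    have := hst i (n + 2 - i) (by simpa using hc)
    omega
  have hkne : (((Finset.Icc (j + 1) n).filter (fun k => D (i, k) = false))).Nonempty :=
    ⟨n + 2 - i, by simp only [Finset.mem_filter, Finset.mem_Icc]; exact ⟨⟨by omega, by omega⟩, hb0⟩⟩
  obtain ⟨c, hc⟩ := Finset.min_of_nonempty hkne
  have hcmem := Finset.mem_of_min hc
  simp only [Finset.mem_filter, Finset.mem_Icc] at hcmem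
  have hkc : kIdx n D i j = c := by
    rw [kIdx, hc]; exact WithTop.untopD_coe 0 c
  -- abbreviations
  set h := hIdx D i j with hdef
  set k := kIdx n D i j with kdef
  have hk1 : j + 1 ≤ k := by rw [hkc]; exact hcmem.1.1
  have hk2 : k ≤ n := by rw [hkc]; exact hcmem.1.2
  have hk3 : D (i, k) = false := by rw [hkc]; exact hcmem.2
  have hmemRect : ∀ p q, h ≤ p → p ≤ i → j ≤ q → q ≤ k → (p, q) ∈ Rect n D i j := by
    intro p q a1 a2 a3 a4
    rw [Rect, Finset.mem_Icc]
    exact ⟨⟨a1, a3⟩, ⟨a2, a4⟩⟩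
  have hcr : ∀ p q, h ≤ p → p ≤ i → j ≤ q → q ≤ k →
      (p ≠ h ∨ q ≠ j) → (p ≠ h ∨ q ≠ k) → (p ≠ i ∨ q ≠ k) → D (p, q) = true := by
    intro p q a1 a2 a3 a4 e1 e2 e3
    by_contra hfa
    have hbump : D (p, q) = false := by
      cases hpq : D (p, q) with
      | false => rfl
      | true => exact absurd hpq hfa
    have := (hiff p q (hmemRect p q a1 a2 a3 a4)).mp hbump
    rcases this with hx | hx | hx <;> rw [Prod.ext_iff] at hx <;> simp at hx <;> omega
  have hbhk : D (h, k) = false :=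
    (hiff h k (hmemRect h k le_rfl (by omega) (by omega) le_rfl)).mpr (Or.inr (Or.inl rfl))
  exact ⟨hh1, hh2, by omega, hk2, hcross, hh3, hbhk, hk3, hcr⟩

end PipeDream
namespace PipeDream

lemma moveAux_ii (n m : ℕ) (D : PipeDream) (i j : ℕ)
    (hrow : hIdx D i j < maxBumpRow n D i j) :
    moveAux n (m + 1) D i j = moveAux n m (moveAux n m D (maxBumpRow n D i j) j) i j := by
  show (if maxBumpRow n D i j = hIdx D i j ∧ minBumpCol n D i j = kIdx n D i j then
        ladderMove n D i j
      else if hIdx D i j < maxBumpRow n D i j then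
        moveAux n m (moveAux n m D (maxBumpRow n D i j) j) i j
      else
        moveAux n m (moveAux n m D i (minBumpCol n D i j)) i j) = _
  rw [if_neg (fun hc => absurd hc.1 (by omega)), if_pos hrow]

lemma moveAux_iii (n m : ℕ) (D : PipeDream) (i j : ℕ)
    (hcol : minBumpCol n D i j ≠ kIdx n D i j)
    (hrow : ¬ hIdx D i j < maxBumpRow n D i j) :
    moveAux n (m + 1) D i j = moveAux n m (moveAux n m D i (minBumpCol n D i j)) i j := by
  show (if maxBumpRow n D i j = hIdx D i j ∧ minBumpCol n D i j = kIdx n D i j then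
        ladderMove n D i j
      else if hIdx D i j < maxBumpRow n D i j then
        moveAux n m (moveAux n m D (maxBumpRow n D i j) j) i j
      else
        moveAux n m (moveAux n m D i (minBumpCol n D i j)) i j) = _
  rw [if_neg (fun hc => hcol hc.2), if_neg hrow]

lemma swap_eq (D : PipeDream) (P1 P2 P3 P4 : ℕ × ℕ)
    (h13 : P1 ≠ P3) (h14 : P1 ≠ P4) (h23 : P2 ≠ P3) (h24 : P2 ≠ P4) :
    (fun st => if st = P1 then false else if st = P2 then true else
      (if st = P3 then false else if st = P4 then true else D st))
    = fun st => if st = P3 then false else if st = P4 then true else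
      (if st = P1 then false else if st = P2 then true else D st) := by
  funext st
  by_cases e1 : st = P1 <;> by_cases e2 : st = P2 <;> by_cases e3 : st = P3 <;>
    by_cases e4 : st = P4 <;> simp_all

lemma five_eq (D : PipeDream) (P1 P2 P3 P4 P5 : ℕ × ℕ)
    (n1 : P1 ≠ P2) (n2 : P1 ≠ P3) (n3 : P1 ≠ P4) (n4 : P1 ≠ P5)
    (n5 : P2 ≠ P3) (n6 : P2 ≠ P4) (n7 : P2 ≠ P5)
    (n8 : P3 ≠ P4) (n9 : P3 ≠ P5) (n10 : P4 ≠ P5)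
    (hD : D P2 = true) :
    (fun st => if st = P1 then false else if st = P2 then true else
      (if st = P3 then false else if st = P4 then true else
        (if st = P2 then false else if st = P5 then true else D st)))
    = fun st => if st = P3 then false else if st = P5 then true else
        (if st = P1 then false else if st = P4 then true else D st) := by
  funext st
  by_cases e1 : st = P1
  · subst e1; rw [if_pos rfl, if_neg n2, if_neg n4, if_pos rfl]
  by_cases e2 : st = P2
  · subst e2
    rw [if_neg (Ne.symm n1), if_pos rfl, if_neg n5, if_neg n7, if_neg (Ne.symm n1), if_neg n6]
    exact hD.symm
  by_cases e3 : st = P3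
  · subst e3; rw [if_neg (Ne.symm n2), if_neg (Ne.symm n5), if_pos rfl, if_pos rfl]
  by_cases e4 : st = P4
  · subst e4
    rw [if_neg (Ne.symm n3), if_neg (Ne.symm n6), if_neg (Ne.symm n8), if_pos rfl,
      if_neg (Ne.symm n8), if_neg n10, if_neg (Ne.symm n3), if_pos rfl]
  by_cases e5 : st = P5
  · subst e5
    rw [if_neg (Ne.symm n4), if_neg (Ne.symm n7), if_neg (Ne.symm n9), if_neg (Ne.symm n10),
      if_neg (Ne.symm n7), if_pos rfl, if_neg (Ne.symm n9), if_pos rfl]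
  · rw [if_neg e1, if_neg e2, if_neg e3, if_neg e4, if_neg e2, if_neg e5,
      if_neg e3, if_neg e5, if_neg e1, if_neg e4]

/-- The disjoint cases of the exchange lemma. -/
lemma disjoint_case (n : ℕ) (D : PipeDream) {i j h k p q h' k' : ℕ}
    (pic : LMPic n D i j h k) (pic' : LMPic n D p q h' k')
    (d1 : ∀ r c, h ≤ r → r ≤ i → j ≤ c → c ≤ k → (r, c) ≠ (p, q) ∧ (r, c) ≠ (h', k'))
    (d2 : ∀ r c, h' ≤ r → r ≤ p → q ≤ c → c ≤ k' → (r, c) ≠ (i, j) ∧ (r, c) ≠ (h, k)) :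
    LadderStep n (ladderMove n D i j) (move n (ladderMove n D p q) i j) := by
  have hHI := pic.hi; have hJK := pic.jk
  have hHI' := pic'.hi; have hJK' := pic'.jk
  have hEdef := pic_ladderMove pic
  have hD1def := pic_ladderMove pic'
  set E : PipeDream := fun st =>
    if st = (i, j) then false else if st = (h, k) then true else D st with hE
  set D1 : PipeDream := fun st =>
    if st = (p, q) then false else if st = (h', k') then true else D st with hD1
  have hD1val : ∀ r c, (r, c) ≠ (p, q) → (r, c) ≠ (h', k') → D1 (r, c) = D (r, c) := by
    intro r c a b; rw [hD1]; simp only [if_neg a, if_neg b]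
  have hEval : ∀ r c, (r, c) ≠ (i, j) → (r, c) ≠ (h, k) → E (r, c) = D (r, c) := by
    intro r c a b; rw [hE]; simp only [if_neg a, if_neg b]
  have picD1 : LMPic n D1 i j h k := by
    refine ⟨pic.h1, pic.hi, pic.jk, pic.kn, ?_, ?_, ?_, ?_, ?_⟩
    · obtain ⟨a, b⟩ := d1 i j (by omega) le_rfl le_rfl (by omega)
      rw [hD1val _ _ a b]; exact pic.cij
    · obtain ⟨a, b⟩ := d1 h j le_rfl (by omega) le_rfl (by omega)
      rw [hD1val _ _ a b]; exact pic.bhj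
    · obtain ⟨a, b⟩ := d1 h k le_rfl (by omega) (by omega) le_rfl
      rw [hD1val _ _ a b]; exact pic.bhk
    · obtain ⟨a, b⟩ := d1 i k (by omega) le_rfl (by omega) le_rfl
      rw [hD1val _ _ a b]; exact pic.bik
    · intro r c a1 a2 a3 a4 e1 e2 e3
      obtain ⟨a, b⟩ := d1 r c a1 a2 a3 a4
      rw [hD1val _ _ a b]; exact pic.cross r c a1 a2 a3 a4 e1 e2 e3
  have picE : LMPic n E p q h' k' := by
    refine ⟨pic'.h1, pic'.hi, pic'.jk, pic'.kn, ?_, ?_, ?_, ?_, ?_⟩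
    · obtain ⟨a, b⟩ := d2 p q (by omega) le_rfl le_rfl (by omega)
      rw [hEval _ _ a b]; exact pic'.cij
    · obtain ⟨a, b⟩ := d2 h' q le_rfl (by omega) le_rfl (by omega)
      rw [hEval _ _ a b]; exact pic'.bhj
    · obtain ⟨a, b⟩ := d2 h' k' le_rfl (by omega) (by omega) le_rfl
      rw [hEval _ _ a b]; exact pic'.bhk
    · obtain ⟨a, b⟩ := d2 p k' (by omega) le_rfl (by omega) le_rfl
      rw [hEval _ _ a b]; exact pic'.bik
    · intro r c a1 a2 a3 a4 e1 e2 e3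
      obtain ⟨a, b⟩ := d2 r c a1 a2 a3 a4
      rw [hEval _ _ a b]; exact pic'.cross r c a1 a2 a3 a4 e1 e2 e3
  rw [hEdef, hD1def]
  refine ⟨p, q, pic_lm picE, ?_⟩
  rw [pic_move picD1, pic_ladderMove picD1, pic_ladderMove picE]
  have h13 := (d1 i j (by omega) le_rfl le_rfl (by omega)).1
  have h14 := (d1 i j (by omega) le_rfl le_rfl (by omega)).2
  have h23 := (d1 h k le_rfl (by omega) (by omega) le_rfl).1
  have h24 := (d1 h k le_rfl (by omega) (by omega) le_rfl).2
  rw [hD1, hE]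
  exact swap_eq D (i, j) (h, k) (p, q) (h', k') h13 h14 h23 h24

end PipeDream
namespace PipeDream

/-- Case C of the exchange lemma: the other move is at `(h, q)` with `j < q < k`. -/
lemma caseC (n : ℕ) (D : PipeDream) {i j q h k h' : ℕ}
    (pic : LMPic n D i j h k) (pic' : LMPic n D h q h' k)
    (hjq : j < q) (hqk : q < k) :
    LadderStep n (ladderMove n D i j) (move n (ladderMove n D h q) i j) := by
  have hH1 := pic.h1; have hHI := pic.hi; have hJK := pic.jk; have hKN := pic.kn
  have hH1' := pic'.h1; have hH'H := pic'.hi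
  have hDhq := pic'.cij
  rw [pic_ladderMove pic, pic_ladderMove pic']
  set E : PipeDream := fun st =>
    if st = (i, j) then false else if st = (h, k) then true else D st with hE
  set D1 : PipeDream := fun st =>
    if st = (h, q) then false else if st = (h', k) then true else D st with hD1
  have hD1val : ∀ r c, (r, c) ≠ (h, q) → (r, c) ≠ (h', k) → D1 (r, c) = D (r, c) := by
    intro r c a b; rw [hD1]; simp only [if_neg a, if_neg b]
  have hEval : ∀ r c, (r, c) ≠ (i, j) → (r, c) ≠ (h, k) → E (r, c) = D (r, c) := by
    intro r c a b; rw [hE]; simp only [if_neg a, if_neg b]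
  -- the picture of (i,q) in D1
  have picD1iq : LMPic n D1 i q h k := by
    refine ⟨pic.h1, pic.hi, hqk, pic.kn, ?_, ?_, ?_, ?_, ?_⟩
    · rw [hD1val _ _ (pne1 (by omega)) (pne1 (by omega))]
      exact pic.cross i q (by omega) le_rfl (by omega) (by omega)
        (Or.inl (by omega)) (Or.inl (by omega)) (Or.inr (by omega))
    · rw [hD1]; simp
    · rw [hD1val _ _ (pne2 (by omega)) (pne1 (by omega))]; exact pic.bhk
    · rw [hD1val _ _ (pne1 (by omega)) (pne1 (by omega))]; exact pic.bik
    · intro r c a1 a2 a3 a4 e1 e2 e3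
      rw [hD1val _ _ (pneOr e1) (pne1 (by omega))]
      exact pic.cross r c a1 a2 (by omega) a4 (Or.inr (by omega)) e2 e3
  -- the picture of (i,j) in D2
  have hD1ik : D1 (i, k) = false := picD1iq.bik
  have hD1hj : D1 (h, j) = false := by
    rw [hD1val _ _ (pne2 (by omega)) (pne1 (by omega))]; exact pic.bhj
  have hIdx1 : hIdx D1 i j = h := by
    refine hIdx_eq_of D1 pic.h1 pic.hi hD1hj ?_
    intro r hr1 hr2
    rw [hD1val _ _ (pne1 (by omega)) (pne1 (by omega))]
    exact pic.cross r j (by omega) (by omega) le_rfl (by omega)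
      (Or.inl (by omega)) (Or.inr (by omega)) (Or.inl (by omega))
  have kIdx1 : kIdx n D1 i j = k := by
    refine kIdx_eq_of n D1 (by omega) pic.kn hD1ik ?_
    intro c hc1 hc2
    rw [hD1val _ _ (pne1 (by omega)) (pne1 (by omega))]
    exact pic.cross i c (by omega) le_rfl (by omega) (by omega)
      (Or.inl (by omega)) (Or.inl (by omega)) (Or.inr (by omega))
  have maxB1 : maxBumpRow n D1 i j = h := by
    refine maxBumpRow_eq_of n D1 (le_of_eq hIdx1) pic.hi ⟨j, le_rfl, by omega, hD1hj⟩ ?_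
    intro r hr1 hr2 c hc1 hc2
    rw [kIdx1] at hc2
    rw [hD1val _ _ (pne1 (by omega)) (pne1 (by omega))]
    exact pic.cross r c (by omega) (by omega) hc1 hc2
      (Or.inl (by omega)) (Or.inl (by omega)) (Or.inl (by omega))
  have minB1 : minBumpCol n D1 i j = q := by
    refine minBumpCol_eq_of n D1 (by omega) (by rw [kIdx1]; omega)
      ⟨h, by rw [hIdx1], by omega, by rw [hD1]; simp⟩ ?_
    intro c hc1 hc2 r hr1 hr2
    rw [hIdx1] at hr1
    rw [hD1val _ _ (pne2 (by omega)) (pne2 (by omega))]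
    exact pic.cross r c hr1 hr2 (by omega) (by omega)
      (Or.inr (by omega)) (Or.inr (by omega)) (Or.inr (by omega))
  -- compute the move
  obtain ⟨m, hm⟩ : ∃ m, (n + 2) ^ (n + 2) = m + 2 := ⟨(n + 2) ^ (n + 2) - 2, fuel_eq n⟩
  rw [move, hm,
    moveAux_iii n _ D1 i j (by rw [minB1, kIdx1]; omega) (by rw [hIdx1, maxB1]; omega), minB1,
    pic_moveAux picD1iq, pic_ladderMove picD1iq]
  set D2 : PipeDream := fun st =>
    if st = (i, q) then false else if st = (h, k) then true else D1 st with hD2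
  have hD2val : ∀ r c, (r, c) ≠ (i, q) → (r, c) ≠ (h, k) → D2 (r, c) = D1 (r, c) := by
    intro r c a b; rw [hD2]; simp only [if_neg a, if_neg b]
  have picD2 : LMPic n D2 i j h q := by
    refine ⟨pic.h1, pic.hi, hjq, by omega, ?_, ?_, ?_, ?_, ?_⟩
    · rw [hD2val _ _ (pne2 (by omega)) (pne1 (by omega)),
        hD1val _ _ (pne1 (by omega)) (pne1 (by omega))]
      exact pic.cij
    · rw [hD2val _ _ (pne1 (by omega)) (pne2 (by omega))]; exact hD1hj
    · rw [hD2val _ _ (pne1 (by omega)) (pne2 (by omega)), hD1]; simp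
    · rw [hD2]; simp
    · intro r c a1 a2 a3 a4 e1 e2 e3
      rw [hD2val _ _ (pneOr e3) (pne2 (by omega)),
        hD1val _ _ (pneOr e2) (pne2 (by omega))]
      exact pic.cross r c a1 a2 a3 (by omega) e1 (Or.inr (by omega)) (Or.inr (by omega))
  rw [pic_moveAux picD2, pic_ladderMove picD2]
  -- the picture of (i,q) in E
  have picE : LMPic n E i q h' k := by
    refine ⟨pic'.h1, by omega, hqk, pic.kn, ?_, ?_, ?_, ?_, ?_⟩
    · rw [hEval _ _ (pne2 (by omega)) (pne1 (by omega))]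
      exact pic.cross i q (by omega) le_rfl (by omega) (by omega)
        (Or.inl (by omega)) (Or.inl (by omega)) (Or.inr (by omega))
    · rw [hEval _ _ (pne1 (by omega)) (pne1 (by omega))]; exact pic'.bhj
    · rw [hEval _ _ (pne1 (by omega)) (pne1 (by omega))]; exact pic'.bhk
    · rw [hEval _ _ (pne2 (by omega)) (pne1 (by omega))]; exact pic.bik
    · intro r c a1 a2 a3 a4 e1 e2 e3
      by_cases hrc : (r, c) = (h, k)
      · rw [hrc, hE]; exact upd_mid (pne1 (by omega))
      · rw [hEval _ _ (pne2 (by omega)) hrc]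
        by_cases hrh : r ≤ h
        · exact pic'.cross r c a1 hrh a3 a4 e1 e2 (pOrne hrc)
        · exact pic.cross r c (by omega) a2 (by omega) a4
            (Or.inl (by omega)) (Or.inl (by omega)) e3
  refine ⟨i, q, pic_lm picE, ?_⟩
  rw [pic_ladderMove picE]
  simp only [hD2, hD1, hE]
  exact five_eq D (i, j) (h, q) (i, q) (h, k) (h', k)
    (pne1 (by omega)) (pne2 (by omega)) (pne1 (by omega)) (pne1 (by omega))
    (pne1 (by omega)) (pne2 (by omega)) (pne1 (by omega))
    (pne1 (by omega)) (pne1 (by omega)) (pne1 (by omega)) hDhq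

/-- Case D of the exchange lemma: the other move is at `(p, k)` with `h < p < i`. -/
lemma caseD (n : ℕ) (D : PipeDream) {i j p h k k' : ℕ}
    (pic : LMPic n D i j h k) (pic' : LMPic n D p k h k')
    (hhp : h < p) (hpi : p < i) :
    LadderStep n (ladderMove n D i j) (move n (ladderMove n D p k) i j) := by
  have hH1 := pic.h1; have hHI := pic.hi; have hJK := pic.jk; have hKN := pic.kn
  have hKK' := pic'.jk; have hKN' := pic'.kn
  have hDpk := pic'.cij
  rw [pic_ladderMove pic, pic_ladderMove pic']
  set E : PipeDream := fun st =>
    if st = (i, j) then false else if st = (h, k) then true else D st with hE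
  set D1 : PipeDream := fun st =>
    if st = (p, k) then false else if st = (h, k') then true else D st with hD1
  have hD1val : ∀ r c, (r, c) ≠ (p, k) → (r, c) ≠ (h, k') → D1 (r, c) = D (r, c) := by
    intro r c a b; rw [hD1]; simp only [if_neg a, if_neg b]
  have hEval : ∀ r c, (r, c) ≠ (i, j) → (r, c) ≠ (h, k) → E (r, c) = D (r, c) := by
    intro r c a b; rw [hE]; simp only [if_neg a, if_neg b]
  -- the picture of (p,j) in D1
  have picD1pj : LMPic n D1 p j h k := by
    refine ⟨pic.h1, hhp, pic.jk, pic.kn, ?_, ?_, ?_, ?_, ?_⟩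
    · rw [hD1val _ _ (pne2 (by omega)) (pne1 (by omega))]
      exact pic.cross p j (by omega) (by omega) le_rfl (by omega)
        (Or.inl (by omega)) (Or.inr (by omega)) (Or.inl (by omega))
    · rw [hD1val _ _ (pne1 (by omega)) (pne2 (by omega))]; exact pic.bhj
    · rw [hD1val _ _ (pne1 (by omega)) (pne2 (by omega))]; exact pic.bhk
    · rw [hD1]; exact upd_fst
    · intro r c a1 a2 a3 a4 e1 e2 e3
      rw [hD1val _ _ (pneOr e3) (pne2 (by omega))]
      exact pic.cross r c a1 (by omega) a3 a4 e1 e2 (Or.inl (by omega))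
  have hD1ik : D1 (i, k) = false := by
    rw [hD1val _ _ (pne1 (by omega)) (pne1 (by omega))]; exact pic.bik
  have hD1hj : D1 (h, j) = false := picD1pj.bhj
  have hIdx1 : hIdx D1 i j = h := by
    refine hIdx_eq_of D1 pic.h1 pic.hi hD1hj ?_
    intro r hr1 hr2
    rw [hD1val _ _ (pne2 (by omega)) (pne2 (by omega))]
    exact pic.cross r j (by omega) (by omega) le_rfl (by omega)
      (Or.inl (by omega)) (Or.inr (by omega)) (Or.inl (by omega))
  have kIdx1 : kIdx n D1 i j = k := by
    refine kIdx_eq_of n D1 (by omega) pic.kn hD1ik ?_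
    intro c hc1 hc2
    rw [hD1val _ _ (pne1 (by omega)) (pne1 (by omega))]
    exact pic.cross i c (by omega) le_rfl (by omega) (by omega)
      (Or.inl (by omega)) (Or.inl (by omega)) (Or.inr (by omega))
  have maxB1 : maxBumpRow n D1 i j = p := by
    refine maxBumpRow_eq_of n D1 (by omega) hpi
      ⟨k, by omega, by rw [kIdx1], picD1pj.bik⟩ ?_
    intro r hr1 hr2 c hc1 hc2
    rw [kIdx1] at hc2
    rw [hD1val _ _ (pne1 (by omega)) (pne1 (by omega))]
    exact pic.cross r c (by omega) (by omega) hc1 hc2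
      (Or.inl (by omega)) (Or.inl (by omega)) (Or.inl (by omega))
  -- compute the move
  obtain ⟨m, hm⟩ : ∃ m, (n + 2) ^ (n + 2) = m + 2 := ⟨(n + 2) ^ (n + 2) - 2, fuel_eq n⟩
  rw [move, hm, moveAux_ii n _ D1 i j (by rw [hIdx1, maxB1]; omega), maxB1,
    pic_moveAux picD1pj, pic_ladderMove picD1pj]
  set D2 : PipeDream := fun st =>
    if st = (p, j) then false else if st = (h, k) then true else D1 st with hD2
  have hD2val : ∀ r c, (r, c) ≠ (p, j) → (r, c) ≠ (h, k) → D2 (r, c) = D1 (r, c) := by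
    intro r c a b; rw [hD2]; simp only [if_neg a, if_neg b]
  have picD2 : LMPic n D2 i j p k := by
    refine ⟨by omega, hpi, pic.jk, pic.kn, ?_, ?_, ?_, ?_, ?_⟩
    · rw [hD2val _ _ (pne1 (by omega)) (pne1 (by omega)),
        hD1val _ _ (pne2 (by omega)) (pne1 (by omega))]
      exact pic.cij
    · rw [hD2]; exact upd_fst
    · rw [hD2val _ _ (pne2 (by omega)) (pne1 (by omega))]; exact picD1pj.bik
    · rw [hD2val _ _ (pne1 (by omega)) (pne1 (by omega))]; exact hD1ik
    · intro r c a1 a2 a3 a4 e1 e2 e3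
      rw [hD2val _ _ (pneOr e1) (pne1 (by omega)),
        hD1val _ _ (pneOr e2) (pne1 (by omega))]
      exact pic.cross r c (by omega) a2 a3 a4 (Or.inl (by omega)) (Or.inl (by omega)) e3
  rw [pic_moveAux picD2, pic_ladderMove picD2]
  -- the picture of (p,j) in E
  have picE : LMPic n E p j h k' := by
    refine ⟨pic.h1, hhp, by omega, hKN', ?_, ?_, ?_, ?_, ?_⟩
    · rw [hEval _ _ (pne1 (by omega)) (pne2 (by omega))]
      exact pic.cross p j (by omega) (by omega) le_rfl (by omega)
        (Or.inl (by omega)) (Or.inr (by omega)) (Or.inl (by omega))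
    · rw [hEval _ _ (pne1 (by omega)) (pne2 (by omega))]; exact pic.bhj
    · rw [hEval _ _ (pne1 (by omega)) (pne2 (by omega))]; exact pic'.bhk
    · rw [hEval _ _ (pne1 (by omega)) (pne2 (by omega))]; exact pic'.bik
    · intro r c a1 a2 a3 a4 e1 e2 e3
      by_cases hrc : (r, c) = (h, k)
      · rw [hrc, hE]; exact upd_mid (pne1 (by omega))
      · rw [hEval _ _ (pne1 (by omega)) hrc]
        by_cases hck : c ≤ k
        · exact pic.cross r c a1 (by omega) a3 hck e1 (pOrne hrc) (Or.inl (by omega))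
        · exact pic'.cross r c a1 a2 (by omega) a4 (Or.inr (by omega)) e2 e3
  refine ⟨p, j, pic_lm picE, ?_⟩
  rw [pic_ladderMove picE]
  simp only [hD2, hD1, hE]
  exact five_eq D (i, j) (p, k) (p, j) (h, k) (h, k')
    (pne1 (by omega)) (pne1 (by omega)) (pne1 (by omega)) (pne1 (by omega))
    (pne2 (by omega)) (pne1 (by omega)) (pne1 (by omega))
    (pne1 (by omega)) (pne1 (by omega)) (pne2 (by omega)) hDpk

end PipeDream
namespace PipeDream

lemma key (n : ℕ) (w : Equiv.Perm ℕ) (D : PipeDream) (hD : D ∈ RPD n w) {i j p q : ℕ}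
    (hlm : LadderMovable n D i j) (hlm' : LadderMovable n D p q)
    (hp : p ≤ i) (hq : j ≤ q) (hne : (p, q) ≠ (i, j)) :
    Movable (ladderMove n D p q) i j ∧
      LadderStep n (ladderMove n D i j) (move n (ladderMove n D p q) i j) := by
  obtain ⟨h, k, pic⟩ : ∃ a b, LMPic n D i j a b := ⟨_, _, lm_pic hD hlm⟩
  obtain ⟨h', k', pic'⟩ : ∃ a b, LMPic n D p q a b := ⟨_, _, lm_pic hD hlm'⟩
  have hH1 := pic.h1; have hHI := pic.hi; have hJK := pic.jk; have hKN := pic.kn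
  have hH1' := pic'.h1; have hHI' := pic'.hi; have hJK' := pic'.jk; have hKN' := pic'.kn
  -- (h,j) is not a moved point
  have t1 : (h, j) ≠ (p, q) := by
    intro e
    have := pic'.cij; rw [← e, pic.bhj] at this; exact absurd this (by simp)
  have t2 : (h, j) ≠ (h', k') := pne2 (by omega)
  have hne' : (i, j) ≠ (p, q) := Ne.symm hne
  have hne2 : (i, j) ≠ (h', k') := pne2 (by omega)
  have hEdef := pic_ladderMove pic
  have hD1def := pic_ladderMove pic'
  rw [hEdef, hD1def]
  set E : PipeDream := fun st =>
    if st = (i, j) then false else if st = (h, k) then true else D st with hE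
  set D1 : PipeDream := fun st =>
    if st = (p, q) then false else if st = (h', k') then true else D st with hD1
  have hD1val : ∀ st, st ≠ (p, q) → st ≠ (h', k') → D1 st = D st := by
    intro st a b; rw [hD1]; simp only [if_neg a, if_neg b]
  have hEval : ∀ st, st ≠ (i, j) → st ≠ (h, k) → E st = D st := by
    intro st a b; rw [hE]; simp only [if_neg a, if_neg b]
  have hmov : Movable D1 i j := by
    refine ⟨by rw [hD1val _ hne' hne2]; exact pic.cij, h, pic.h1, pic.hi, ?_⟩
    rw [hD1val _ t1 t2]; exact pic.bhj
  refine ⟨hmov, ?_⟩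
  by_cases hA : p < h
  · -- Case A : disjoint, p above h
    rw [← hEdef, ← hD1def]
    refine disjoint_case n D pic pic' ?_ ?_
    · intro r c a1 a2 a3 a4
      exact ⟨pne1 (by omega), pne1 (by omega)⟩
    · intro r c a1 a2 a3 a4
      exact ⟨pne1 (by omega), pne1 (by omega)⟩
  push_neg at hA
  by_cases hB : k < q
  · -- Case B : disjoint, q right of k
    rw [← hEdef, ← hD1def]
    refine disjoint_case n D pic pic' ?_ ?_
    · intro r c a1 a2 a3 a4
      exact ⟨pne2 (by omega), pne2 (by omega)⟩
    · intro r c a1 a2 a3 a4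
      exact ⟨pne2 (by omega), pne2 (by omega)⟩
  push_neg at hB
  rcases eq_or_lt_of_le hA with hph | hph
  · -- p = h
    rcases eq_or_lt_of_le hq with hqj | hqj
    · exact absurd (show (h, j) = (p, q) by rw [hph, hqj]) t1
    rcases eq_or_lt_of_le hB with hqk | hqk
    · -- q = k : (h,k) is a bump, contradiction
      have := pic'.cij; rw [← hph, hqk, pic.bhk] at this; exact absurd this (by simp)
    -- Case C : p = h, j < q < k
    have hkk : k = k' := by
      rw [← pic_kIdx pic']
      symm
      refine kIdx_eq_of n D (by omega) hKN ?_ ?_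
      · show D (p, k) = false
        rw [← hph]; exact pic.bhk
      · intro c hc1 hc2
        show D (p, c) = true
        rw [← hph]
        exact pic.cross h c le_rfl (by omega) (by omega) (by omega)
          (Or.inr (by omega)) (Or.inr (by omega)) (Or.inl (by omega))
    subst hkk
    subst hph
    rw [← hEdef, ← hD1def]
    exact caseC n D pic pic' hqj hqk
  · -- h < p
    rcases eq_or_lt_of_le hB with hqk | hqk
    · -- q = k
      rcases eq_or_lt_of_le hp with hpi | hpi
      · have := pic'.cij; rw [hpi, hqk, pic.bik] at this; exact absurd this (by simp)
      -- Case D : h < p < i, q = k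
      subst hqk
      have hhh : h' = h := by
        rw [← pic_hIdx pic']
        refine hIdx_eq_of D pic.h1 hph pic.bhk ?_
        intro r hr1 hr2
        exact pic.cross r q (by omega) (by omega) (by omega) le_rfl
          (Or.inr (by omega)) (Or.inl (by omega)) (Or.inl (by omega))
      subst hhh
      rw [← hEdef, ← hD1def]
      exact caseD n D pic pic' hph hpi
    · -- q < k
      rcases eq_or_lt_of_le hq with hqj | hqj
      · -- q = j, h < p ≤ i : impossible
        exfalso
        rcases eq_or_lt_of_le hp with hpi | hpi
        · exact hne (by rw [hpi, hqj])
        have hh'h : h' = h := by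
          rw [← pic_hIdx pic', ← hqj]
          refine hIdx_eq_of D pic.h1 hph pic.bhj ?_
          intro r hr1 hr2
          exact pic.cross r j (by omega) (by omega) le_rfl (by omega)
            (Or.inl (by omega)) (Or.inr (by omega)) (Or.inl (by omega))
        have hkk' : k < k' := by
          by_contra hcon
          push_neg at hcon
          have := pic.cross p k' (by omega) (by omega) (by omega) (by omega)
            (Or.inl (by omega)) (Or.inl (by omega)) (Or.inl (by omega))
          rw [pic'.bik] at this; exact absurd this (by simp)
        have := pic'.cross h k (by omega) (by omega) (by omega) (by omega)
          (Or.inr (by omega)) (Or.inr (by omega)) (Or.inl (by omega))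
        rw [pic.bhk] at this; exact absurd this (by simp)
      · -- j < q < k, h < p ≤ i : impossible
        exfalso
        have hh'h : h' < h := by
          by_contra hcon
          push_neg at hcon
          have := pic.cross h' q (by omega) (by omega) (by omega) (by omega)
            (Or.inr (by omega)) (Or.inr (by omega)) (Or.inr (by omega))
          rw [pic'.bhj] at this; exact absurd this (by simp)
        have hkk' : k ≤ k' := by
          by_contra hcon
          push_neg at hcon
          have := pic.cross p k' (by omega) (by omega) (by omega) (by omega)
            (Or.inl (by omega)) (Or.inl (by omega)) (Or.inr (by omega))
          rw [pic'.bik] at this; exact absurd this (by simp)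
        have := pic'.cross h k (by omega) (by omega) (by omega) (by omega)
          (Or.inl (by omega)) (Or.inl (by omega)) (Or.inl (by omega))
        rw [pic.bhk] at this; exact absurd this (by simp)

end PipeDream

open PipeDream in
/-- if (i,j) is ladder movable in D and the M-induction
hypotheses hold, then L_{ij}(D) is the unique minimal element of V_{ij}(D). -/
theorem stmt10 (n : ℕ) (w : Equiv.Perm ℕ) (D : PipeDream) (hD : D ∈ RPD n w)
    (i j : ℕ) (hlm : LadderMovable n D i j)
    (IH1 : ∀ Q : PipeDream, ladderLE n D Q → Q ≠ D → ∀ p q, Movable Q p q →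
      move n Q p q ∈ V n Q p q ∧ ∀ R ∈ V n Q p q, ladderLE n (move n Q p q) R)
    (IH2 : ∀ p q, NorthEastOf p q i j → (p, q) ≠ (i, j) → Movable D p q →
      move n D p q ∈ V n D p q ∧ ∀ R ∈ V n D p q, ladderLE n (move n D p q) R) :
    ladderMove n D i j ∈ V n D i j ∧
      ∀ Q ∈ V n D i j, ladderLE n (ladderMove n D i j) Q := by
  constructor
  · exact ⟨Relation.ReflTransGen.single ⟨i, j, le_rfl, le_rfl, hlm, rfl⟩,
      by simp [ladderMove]⟩
  · rintro Q ⟨hreach, hQij⟩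
    rcases Relation.ReflTransGen.cases_head hreach with rfl |
      ⟨D1, ⟨p, q, hp, hq, hlm', rfl⟩, htail⟩
    · rw [hlm.1.1] at hQij; exact absurd hQij (by simp)
    · have htail' : ladderLE n (ladderMove n D p q) Q :=
        Relation.ReflTransGen.mono
          (fun a b hab => by
            obtain ⟨p', q', _, _, hm, he⟩ := hab
            exact ⟨p', q', hm, he⟩) _ _ htail
      by_cases hpq : (p, q) = (i, j)
      · rw [Prod.mk.injEq] at hpq
        obtain ⟨rfl, rfl⟩ := hpq
        exact htail'
      · obtain ⟨hmov, hstep⟩ := key n w D hD hlm hlm' hp hq hpq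
        have hD1ne : ladderMove n D p q ≠ D := by
          intro he
          have h1 : (ladderMove n D p q) (p, q) = false := by simp [ladderMove]
          rw [he, hlm'.1.1] at h1
          exact absurd h1 (by simp)
        have hle : ladderLE n D (ladderMove n D p q) :=
          Relation.ReflTransGen.single ⟨p, q, hlm', rfl⟩
        obtain ⟨hmem, hmin⟩ := IH1 (ladderMove n D p q) hle hD1ne i j hmov
        exact Relation.ReflTransGen.trans (Relation.ReflTransGen.single hstep)
          (hmin Q ⟨htail, hQij⟩)
end
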